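/- arXiv:1003.5811 — 8 statements merged into one kernel-verified Lean document; each statement's English description precedes it below -/
import Mathlib

section
/- The centralizer of f is supported in nonpositive ad h-weights: ker(ad f) ⊆ ⊕_{i ≤ 0} g(i), i.e. every x ∈ g with [f,x]=0 lies in the sum of the eigenspaces g(i) with i ≤ 0. -/
open LieAlgebra LieModule Module

set_option linter.unusedSectionVars false

section Sl2Aux

variable {K : Type*} [Field K] [CharZero K]
variable {g : Type*} [LieRing g] [LieAlgebra K g] [FiniteDimensional K g]
variable {e h f : g}

local notation "E" => LieModule.toEnd K g g e
local notation "T" => LieModule.toEnd K g g h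

lemma aux_pow_succ_apply (z : g) (m : ℕ) : (E ^ (m + 1)) z = ⁅e, (E ^ m) z⁆ := by
  rw [pow_succ', Module.End.mul_apply, toEnd_apply_apply]

lemma aux_lie_h_pow (hhe : ⁅h, e⁆ = (2 : K) • e) {μ : K} {x y : g}
    (hhx : ⁅h, x⁆ = μ • x + y) :
    ∀ m : ℕ, ⁅h, (E ^ m) x⁆ = (μ + 2 * m) • (E ^ m) x + (E ^ m) y := by
  intro m
  induction m with
  | zero => simpa using hhx
  | succ m ih =>
    rw [aux_pow_succ_apply x m, aux_pow_succ_apply y m,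
      leibniz_lie, hhe, ih, lie_add, lie_smul, smul_lie]
    push_cast
    module

lemma aux_lie_f_pow (hhe : ⁅h, e⁆ = (2 : K) • e) (hfe : ⁅f, e⁆ = -h)
    {μ : K} {x y : g} (hfx : ⁅f, x⁆ = 0) (hhx : ⁅h, x⁆ = μ • x + y) :
    ∀ m : ℕ, ⁅f, (E ^ (m + 1)) x⁆ = -((m : K) + 1) • ((μ + m) • (E ^ m) x + (E ^ m) y) := by
  intro m
  induction m with
  | zero =>
    rw [aux_pow_succ_apply x 0, leibniz_lie, hfe]
    simp only [pow_zero, Module.End.one_apply, hfx, lie_zero, add_zero, neg_lie, hhx]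
    push_cast
    module
  | succ m ih =>
    rw [aux_pow_succ_apply x (m + 1), leibniz_lie, hfe, neg_lie,
      aux_lie_h_pow hhe hhx (m + 1), ih, lie_smul, lie_add, lie_smul,
      ← aux_pow_succ_apply x m, ← aux_pow_succ_apply y m]
    push_cast
    module

lemma aux_exists_pow_zero (hhe : ⁅h, e⁆ = (2 : K) • e) {μ : K} {x y : g}
    (hhx : ⁅h, x⁆ = μ • x + y) {n : ℕ} (hy1 : (E ^ (n + 1)) y = 0) :
    ∃ m : ℕ, (E ^ m) x = 0 := by
  by_contra! contra
  have hyz : ∀ m : ℕ, (E ^ (n + 1 + m)) y = 0 := by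
    intro m
    rw [add_comm (n + 1) m, pow_add, Module.End.mul_apply, hy1, map_zero]
  have hinj : Function.Injective fun m : ℕ => μ + 2 * ((n + 1 + m : ℕ) : K) := by
    intro a b hab
    simp only [add_right_inj] at hab
    have h2 : ((n + 1 + a : ℕ) : K) = ((n + 1 + b : ℕ) : K) :=
      mul_left_cancel₀ two_ne_zero hab
    have := Nat.cast_injective (R := K) h2
    omega
  have hev : ∀ m : ℕ,
      (LieModule.toEnd K g g h).HasEigenvector (μ + 2 * ((n + 1 + m : ℕ) : K))
        ((E ^ (n + 1 + m)) x) := by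
    intro m
    rw [Module.End.hasEigenvector_iff, Module.End.mem_eigenspace_iff]
    refine ⟨?_, contra _⟩
    rw [toEnd_apply_apply, aux_lie_h_pow hhe hhx (n + 1 + m), hyz m, add_zero]
  exact Module.Finite.not_linearIndependent_of_infinite _
    ((LieModule.toEnd K g g h).eigenvectors_linearIndependent'
      (fun m : ℕ => μ + 2 * ((n + 1 + m : ℕ) : K)) hinj _ hev)

lemma aux_f_lie_h (hhf : ⁅h, f⁆ = (-2 : K) • f) {z : g} (hz : ⁅f, z⁆ = 0) :
    ⁅f, ⁅h, z⁆⁆ = 0 := by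
  have h1 : ⁅f, h⁆ = (2 : K) • f := by
    rw [← lie_skew, hhf]; module
  rw [leibniz_lie, hz, lie_zero, add_zero, h1, smul_lie, hz, smul_zero]

lemma aux_triple (he : e ≠ 0) (hhe : ⁅h, e⁆ = (2 : K) • e) (hhf : ⁅h, f⁆ = (-2 : K) • f)
    (hef : ⁅e, f⁆ = h) : IsSl2Triple h e f where
  h_ne_zero := by
    intro hh
    apply he
    have h0 := hhe
    rw [hh, zero_lie] at h0
    rcases smul_eq_zero.mp h0.symm with h2 | h2
    · exact absurd h2 two_ne_zero
    · exact h2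
  lie_e_f := hef
  lie_h_e_nsmul := by rw [hhe, two_smul, two_smul]
  lie_h_f_nsmul := by rw [hhf, two_smul]; module

lemma aux_jordan2 (he : e ≠ 0) (hhe : ⁅h, e⁆ = (2 : K) • e) (hhf : ⁅h, f⁆ = (-2 : K) • f)
    (hef : ⁅e, f⁆ = h) {μ : K} {x : g} (hfx : ⁅f, x⁆ = 0)
    (h2 : ((T - μ • (1 : Module.End K g)) ^ 2) x = 0) : (T - μ • 1) x = 0 := by
  classical
  have t : IsSl2Triple h e f := aux_triple he hhe hhf hef
  set y : g := ⁅h, x⁆ - μ • x with hy_def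
  have hTx : (T - μ • 1) x = y := by
    simp [hy_def, LinearMap.sub_apply, LinearMap.smul_apply, Module.End.one_apply,
      toEnd_apply_apply]
  have hTy : (T - μ • 1) y = 0 := by
    rw [← hTx, ← Module.End.mul_apply, ← pow_two]; exact h2
  rw [hTx]
  by_contra hy
  have hhy : ⁅h, y⁆ = μ • y := by
    have h3 := hTy
    simp only [LinearMap.sub_apply, LinearMap.smul_apply, Module.End.one_apply,
      toEnd_apply_apply, sub_eq_zero] at h3
    exact h3
  have hhx : ⁅h, x⁆ = μ • x + y := by rw [hy_def]; abel
  have hfy : ⁅f, y⁆ = 0 := by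
    rw [hy_def, lie_sub, aux_f_lie_h hhf hfx, lie_smul, hfx, smul_zero, sub_zero]
  have P : t.symm.HasPrimitiveVectorWith y (-μ) :=
    { ne_zero := hy
      lie_h := by rw [neg_lie, hhy, neg_smul]
      lie_e := hfy }
  obtain ⟨n, hn⟩ := P.exists_nat
  have hμ : μ = -(n : K) := by rw [← hn, neg_neg]
  have hy1 : (E ^ (n + 1)) y = 0 := P.pow_toEnd_f_eq_zero_of_eq_nat hn
  have hy2 : ∀ i ≤ n, (E ^ i) y ≠ 0 := fun i hi => P.pow_toEnd_f_ne_zero_of_eq_nat hn hi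
  have hfe : ⁅f, e⁆ = -h := by rw [← lie_skew, hef]
  have hex : ∃ m : ℕ, (E ^ m) x = 0 := aux_exists_pow_zero hhe hhx hy1
  have hfind : (E ^ Nat.find hex) x = 0 := Nat.find_spec hex
  have hm₀0 : Nat.find hex ≠ 0 := by
    intro h0
    rw [h0, pow_zero, Module.End.one_apply] at hfind
    apply hy
    rw [hy_def, hfind, lie_zero, smul_zero, sub_zero]
  obtain ⟨m, hm⟩ := Nat.exists_eq_succ_of_ne_zero hm₀0
  have hEx : (E ^ (m + 1)) x = 0 := by rw [← Nat.succ_eq_add_one, ← hm]; exact hfind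
  have hB := aux_lie_f_pow hhe hfe hfx hhx m
  rw [hEx, lie_zero] at hB
  have hcoeff : ((m : K) + 1) ≠ 0 := Nat.cast_add_one_ne_zero m
  have hsum : (μ + m) • (E ^ m) x + (E ^ m) y = 0 := by
    rcases smul_eq_zero.mp hB.symm with hc | hc
    · exact absurd (neg_eq_zero.mp hc) hcoeff
    · exact hc
  have heq : (E ^ m) y = -((μ + (m : K)) • (E ^ m) x) := by
    rw [add_comm] at hsum
    rwa [add_eq_zero_iff_eq_neg] at hsum
  rcases lt_trichotomy m n with hmn | hmn | hmn
  · -- m < n : applying E to heq kills the RHS, contradicting (E ^ (m+1)) y ≠ 0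
    have hstep : (E ^ (m + 1)) y = -((μ + (m : K)) • (E ^ (m + 1)) x) := by
      rw [aux_pow_succ_apply y m, heq, aux_pow_succ_apply x m, lie_neg, lie_smul]
    exact hy2 (m + 1) (by omega) (by rw [hstep, hEx, smul_zero, neg_zero])
  · -- m = n : the coefficient vanishes, contradicting (E ^ n) y ≠ 0
    subst hmn
    exact hy2 m le_rfl (by rw [heq, hμ]; simp)
  · -- n < m : (E ^ m) y = 0, so (E ^ m) x = 0, contradicting minimality
    have hEy : (E ^ m) y = 0 := by
      obtain ⟨a, ha⟩ : ∃ a, m = a + (n + 1) := ⟨m - (n + 1), by omega⟩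
      rw [ha, pow_add, Module.End.mul_apply, hy1, map_zero]
    have hc2 : μ + (m : K) ≠ 0 := by
      rw [hμ]
      intro hcon
      rw [neg_add_eq_zero] at hcon
      have : n = m := Nat.cast_injective hcon
      omega
    have hxm : (E ^ m) x = 0 := by
      have h0 : (μ + (m : K)) • (E ^ m) x = 0 := by
        rw [← neg_eq_zero, ← heq, hEy]
      exact (smul_eq_zero.mp h0).resolve_left hc2
    exact Nat.find_min hex (by omega) hxm

lemma aux_iter (he : e ≠ 0) (hhe : ⁅h, e⁆ = (2 : K) • e) (hhf : ⁅h, f⁆ = (-2 : K) • f)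
    (hef : ⁅e, f⁆ = h) :
    ∀ (k : ℕ) {μ : K} {x : g}, ⁅f, x⁆ = 0 → ((T - μ • 1) ^ k) x = 0 → (T - μ • 1) x = 0 := by
  intro k
  induction k with
  | zero =>
    intro μ x _ h0
    simp only [pow_zero, Module.End.one_apply] at h0
    rw [h0, map_zero]
  | succ k ih =>
    intro μ x hfx hk
    have hsub : (T - μ • 1) x = ⁅h, x⁆ - μ • x := by
      simp [LinearMap.sub_apply, LinearMap.smul_apply, Module.End.one_apply, toEnd_apply_apply]
    have hfx' : ⁅f, (T - μ • 1) x⁆ = 0 := by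
      rw [hsub, lie_sub, aux_f_lie_h hhf hfx, lie_smul, hfx, smul_zero, sub_zero]
    have hk' : ((T - μ • 1) ^ k) ((T - μ • 1) x) = 0 := by
      rw [← Module.End.mul_apply, ← pow_succ]
      exact hk
    have h2 := ih hfx' hk'
    exact aux_jordan2 he hhe hhf hef hfx (by rw [pow_two, Module.End.mul_apply]; exact h2)

end Sl2Aux

/-- The centralizer of `f` is supported in nonpositive `ad h`-weights:
`ker(ad f) ⊆ ⊕_{i ≤ 0} g(i)`, i.e. every `x ∈ g` with `⁅f, x⁆ = 0` lies in the sum of the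
eigenspaces `g(i)` with `i ≤ 0`. -/
theorem centralizer_f_in_nonpositive_weights
    (K : Type*) [Field K] [IsAlgClosed K] [CharZero K]
    (g : Type*) [LieRing g] [LieAlgebra K g] [FiniteDimensional K g]
    [LieAlgebra.IsSemisimple K g]
    (e h f : g) (he : e ≠ 0)
    (hhe : ⁅h, e⁆ = (2 : K) • e) (hhf : ⁅h, f⁆ = (-2 : K) • f) (hef : ⁅e, f⁆ = h) :
    ∀ x : g, ⁅f, x⁆ = 0 →
      x ∈ ⨆ i : ℤ, ⨆ _ : i ≤ 0,
        Module.End.eigenspace (LieAlgebra.ad K g h) (i : K) := by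
  intro x hx
  classical
  have t : IsSl2Triple h e f := aux_triple he hhe hhf hef
  have had : LieAlgebra.ad K g h = LieModule.toEnd K g g h := rfl
  set N : Submodule K g := LinearMap.ker (LieAlgebra.ad K g f) with hN
  have hmemN : ∀ z : g, z ∈ N ↔ ⁅f, z⁆ = 0 := fun z => by
    simp [hN, LinearMap.mem_ker]
  have hinv : ∀ z ∈ N, (LieAlgebra.ad K g h) z ∈ N := by
    intro z hz
    rw [hmemN] at hz ⊢
    rw [LieAlgebra.ad_apply]
    exact aux_f_lie_h hhf hz
  set T' : Module.End K N := (LieAlgebra.ad K g h).restrict hinv with hT'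
  have hone : ∀ (μ : K) (v : N),
      (((T' - μ • 1) v : N) : g) = ((LieAlgebra.ad K g h) - μ • 1) (v : g) := by
    intro μ v
    simp [hT', LinearMap.restrict_apply, LinearMap.sub_apply, LinearMap.smul_apply,
      Module.End.one_apply]
  have hcoe : ∀ (μ : K) (k : ℕ) (w : N), ((((T' - μ • 1) ^ k) w : N) : g)
      = (((LieAlgebra.ad K g h) - μ • 1) ^ k) (w : g) := by
    intro μ k
    induction k with
    | zero => intro w; simp
    | succ k ih =>
      intro w
      rw [pow_succ', pow_succ', Module.End.mul_apply, Module.End.mul_apply, hone, ih]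
  have hle : Submodule.map N.subtype (⨆ μ : K, T'.maxGenEigenspace μ)
      ≤ ⨆ i : ℤ, ⨆ _ : i ≤ 0, Module.End.eigenspace (LieAlgebra.ad K g h) (i : K) := by
    rw [Submodule.map_iSup]
    refine iSup_le fun μ => ?_
    rintro _ ⟨w, hw, rfl⟩
    obtain ⟨k, hk⟩ := (Module.End.mem_maxGenEigenspace T' μ w).mp hw
    have hk' : (((LieAlgebra.ad K g h) - μ • 1) ^ k) (w : g) = 0 := by
      rw [← hcoe μ k w, hk, Submodule.coe_zero]
    have hw0 : ((LieAlgebra.ad K g h) - μ • 1) (w : g) = 0 := by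
      rw [had] at hk' ⊢
      exact aux_iter he hhe hhf hef k ((hmemN _).mp w.2) hk'
    have hlie : ⁅h, (w : g)⁆ = μ • (w : g) := by
      simp only [LinearMap.sub_apply, LinearMap.smul_apply, Module.End.one_apply,
        LieAlgebra.ad_apply, sub_eq_zero] at hw0
      exact hw0
    show (w : g) ∈ _
    by_cases hw0' : (w : g) = 0
    · rw [hw0']; exact Submodule.zero_mem _
    · have P2 : t.symm.HasPrimitiveVectorWith (w : g) (-μ) :=
        { ne_zero := hw0'
          lie_h := by rw [neg_lie, hlie, neg_smul]
          lie_e := (hmemN _).mp w.2 }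
      obtain ⟨n, hn⟩ := P2.exists_nat
      have hμ : μ = ((-(n : ℤ) : ℤ) : K) := by
        rw [show ((-(n : ℤ) : ℤ) : K) = -((n : ℕ) : K) by push_cast; ring, ← hn, neg_neg]
      have hmem : (w : g) ∈ Module.End.eigenspace (LieAlgebra.ad K g h) ((-(n : ℤ) : ℤ) : K) := by
        rw [Module.End.mem_eigenspace_iff, LieAlgebra.ad_apply, hlie, hμ]
      exact Submodule.mem_iSup_of_mem (-(n : ℤ))
        (Submodule.mem_iSup_of_mem (by omega : -(n : ℤ) ≤ 0) hmem)
  have hxN : x ∈ N := (hmemN x).mpr hx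
  have htop : (⨆ μ : K, T'.maxGenEigenspace μ) = ⊤ := T'.iSup_maxGenEigenspace_eq_top
  exact hle ⟨⟨x, hxN⟩, by rw [htop]; exact Submodule.mem_top, rfl⟩
end

section
/- For every j ∈ ℤ the weight space g(j) decomposes as the internal direct sum g(j) = [e, g(j-2)] ⊕ (ker(ad f) ∩ g(j)); in particular ker(ad f) ∩ g(j) = 0 whenever j ≥ 1. -/
/-!
Let `m` have `ad h`-weight `μ` with `⁅f, ⁅e, m⁆⁆ = 0`. Then `⁅e, ⁅f, m⁆⁆ = ⁅h, m⁆` as for a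
primitive vector, so the `f`-string through `m` obeys `⁅e, f^(n+1) m⁆ = (n+1)(μ-n) f^n m`, and
finite dimensionality forces `μ ∈ ℕ`. Nonzero vectors killed by `f` have weights in `-ℕ`, so the
vector `⁅e, m⁆`, killed by `f` and of weight `μ + 2`, vanishes. Hence `ad f ∘ ad e` is injective,
and so bijective, on `[f, g(j)] ⊆ g(j-2)`: for `x ∈ g(j)` write `⁅f, x⁆ = ⁅f, ⁅e, u⁆⁆`, then
`x = ⁅e, u⁆ + (x - ⁅e, u⁆)` with the second summand in `ker (ad f)`. The sum is direct by the
same vanishing.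
-/

open LieModule Module Submodule

namespace IsSl2Triple

section CommRing

variable {R L M : Type*} [CommRing R] [LieRing L] [LieAlgebra R L]
  [AddCommGroup M] [Module R M] [LieRingModule L M] [LieModule R L M]
  {h e f : L} {m : M} {μ : R}

lemma toEnd_e_mem_eigenspace (t : IsSl2Triple h e f) (hm : m ∈ (toEnd R L M h).eigenspace μ) :
    toEnd R L M e m ∈ (toEnd R L M h).eigenspace (μ + 2) := by
  rw [End.mem_eigenspace_iff] at hm ⊢
  simpa using t.lie_h_pow_toEnd_e hm 1

lemma lie_h_pow_toEnd_f_of_lie_h (t : IsSl2Triple h e f) (hm : ⁅h, m⁆ = μ • m) (n : ℕ) :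
    ⁅h, (toEnd R L M f ^ n) m⁆ = (μ - 2 * n) • (toEnd R L M f ^ n) m := by
  have := t.symm.lie_h_pow_toEnd_e (m := m) (μ := -μ) (by rw [neg_lie, hm, neg_smul]) n
  rw [neg_lie, neg_eq_iff_eq_neg] at this
  rw [this]
  module

lemma toEnd_f_mem_eigenspace (t : IsSl2Triple h e f) (hm : m ∈ (toEnd R L M h).eigenspace μ) :
    toEnd R L M f m ∈ (toEnd R L M h).eigenspace (μ - 2) := by
  rw [End.mem_eigenspace_iff] at hm ⊢
  simpa using t.lie_h_pow_toEnd_f_of_lie_h hm 1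

lemma lie_e_pow_succ_toEnd_f_of_lie_f_lie_e_eq_zero (t : IsSl2Triple h e f) (hm : ⁅h, m⁆ = μ • m)
    (hfe : ⁅f, ⁅e, m⁆⁆ = 0) (n : ℕ) :
    ⁅e, (toEnd R L M f ^ (n + 1)) m⁆ = ((n + 1) * (μ - n)) • (toEnd R L M f ^ n) m := by
  induction n with
  | zero => simp [leibniz_lie e, t.lie_e_f, hm, hfe]
  | succ n ih =>
    rw [pow_succ', End.mul_apply, toEnd_apply_apply, leibniz_lie e, t.lie_e_f,
      t.lie_h_pow_toEnd_f_of_lie_h hm, ih, lie_smul, ← toEnd_apply_apply R, ← End.mul_apply,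
      ← pow_succ', ← add_smul]
    push_cast
    congr 1
    ring

end CommRing

variable {K L M : Type*} [Field K] [CharZero K] [LieRing L] [LieAlgebra K L]
  [AddCommGroup M] [Module K M] [LieRingModule L M] [LieModule K L M] [FiniteDimensional K M]
  {h e f : L} {m : M} {μ : K}

lemma exists_nat_of_lie_f_lie_e_eq_zero (t : IsSl2Triple h e f) (hm₀ : m ≠ 0)
    (hm : ⁅h, m⁆ = μ • m) (hfe : ⁅f, ⁅e, m⁆⁆ = 0) : ∃ n : ℕ, μ = n := by
  obtain ⟨n, hn₀, hn⟩ :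
      ∃ n : ℕ, (toEnd K L M f ^ n) m ≠ 0 ∧ (toEnd K L M f ^ (n + 1)) m = 0 := by
    refine Nat.exists_not_and_succ_of_not_zero_of_exists (p := fun n ↦ _ = 0) hm₀ ?_
    by_contra! hne
    refine Set.infinite_range_of_injective (f := fun n : ℕ ↦ μ - 2 * n)
      (fun a b hab ↦ by simpa using hab) ?_
    exact ((toEnd K L M h).eigenvectors_linearIndependent _
      (fun ⟨_, hs⟩ ↦ (toEnd K L M f ^ hs.choose) m)
      (fun ⟨_, hs⟩ ↦ ⟨by simp [t.lie_h_pow_toEnd_f_of_lie_h hm, hs.choose_spec], hne _⟩)).finite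
  refine ⟨n, ?_⟩
  have := t.lie_e_pow_succ_toEnd_f_of_lie_f_lie_e_eq_zero hm hfe n
  rw [hn, lie_zero, eq_comm, smul_eq_zero_iff_left hn₀, mul_eq_zero, sub_eq_zero] at this
  exact this.resolve_left (Nat.cast_add_one_ne_zero n)

lemma exists_nat_eq_neg_of_lie_f_eq_zero (t : IsSl2Triple h e f) (hm₀ : m ≠ 0)
    (hm : ⁅h, m⁆ = μ • m) (hf : ⁅f, m⁆ = 0) : ∃ n : ℕ, μ = -n :=
  have P : t.symm.HasPrimitiveVectorWith m (-μ) := ⟨hm₀, by rw [neg_lie, hm, neg_smul], hf⟩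
  P.exists_nat.imp fun _ hn ↦ by rw [← hn, neg_neg]

lemma lie_e_eq_zero_of_lie_f_lie_e_eq_zero (t : IsSl2Triple h e f) (hm : ⁅h, m⁆ = μ • m)
    (hfe : ⁅f, ⁅e, m⁆⁆ = 0) : ⁅e, m⁆ = 0 := by
  by_contra hem
  have hm₀ : m ≠ 0 := by rintro rfl; exact hem (lie_zero e)
  obtain ⟨n, rfl⟩ := t.exists_nat_of_lie_f_lie_e_eq_zero hm₀ hm hfe
  obtain ⟨k, hk⟩ := t.exists_nat_eq_neg_of_lie_f_eq_zero hem
    (End.mem_eigenspace_iff.1 (t.toEnd_e_mem_eigenspace (End.mem_eigenspace_iff.2 hm))) hfe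
  have : ((n + 2 + k : ℕ) : K) = 0 := by push_cast; linear_combination hk
  exact absurd (Nat.cast_eq_zero.1 this) (by omega)

lemma lie_f_eq_zero_of_lie_e_lie_f_eq_zero (t : IsSl2Triple h e f) (hm : ⁅h, m⁆ = μ • m)
    (hef : ⁅e, ⁅f, m⁆⁆ = 0) : ⁅f, m⁆ = 0 :=
  t.symm.lie_e_eq_zero_of_lie_f_lie_e_eq_zero (μ := -μ) (by rw [neg_lie, hm, neg_smul]) hef

lemma map_toEnd_e_inf_ker_toEnd_f_eq_bot (t : IsSl2Triple h e f) (μ : K) :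
    map (toEnd K L M e) ((toEnd K L M h).eigenspace μ) ⊓ LinearMap.ker (toEnd K L M f) = ⊥ := by
  rw [eq_bot_iff]
  rintro _ ⟨⟨m, hm, rfl⟩, hfe⟩
  exact t.lie_e_eq_zero_of_lie_f_lie_e_eq_zero (End.mem_eigenspace_iff.1 hm) hfe

lemma ker_toEnd_f_inf_eigenspace_eq_bot (t : IsSl2Triple h e f) (hμ : ∀ n : ℕ, μ ≠ -n) :
    LinearMap.ker (toEnd K L M f) ⊓ (toEnd K L M h).eigenspace μ = ⊥ := by
  rw [eq_bot_iff]
  rintro m ⟨hf, hm⟩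
  by_contra hm₀
  obtain ⟨n, hn⟩ := t.exists_nat_eq_neg_of_lie_f_eq_zero hm₀ (End.mem_eigenspace_iff.1 hm) hf
  exact hμ n hn

lemma disjoint_map_toEnd_f_ker_toEnd_f_comp_toEnd_e (t : IsSl2Triple h e f) (μ : K) :
    Disjoint (map (toEnd K L M f) ((toEnd K L M h).eigenspace μ))
      (LinearMap.ker (toEnd K L M f ∘ₗ toEnd K L M e)) := by
  rw [disjoint_iff, eq_bot_iff]
  rintro _ ⟨⟨m, hm, rfl⟩, hfe⟩
  have hm' := End.mem_eigenspace_iff.1 hm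
  exact t.lie_f_eq_zero_of_lie_e_lie_f_eq_zero hm' <| t.lie_e_eq_zero_of_lie_f_lie_e_eq_zero
    (End.mem_eigenspace_iff.1 (t.toEnd_f_mem_eigenspace hm)) hfe

lemma map_toEnd_e_sup_ker_toEnd_f_inf_eigenspace (t : IsSl2Triple h e f) (μ : K) :
    map (toEnd K L M e) ((toEnd K L M h).eigenspace (μ - 2)) ⊔
      (LinearMap.ker (toEnd K L M f) ⊓ (toEnd K L M h).eigenspace μ) =
      (toEnd K L M h).eigenspace μ := by
  refine le_antisymm (sup_le ?_ inf_le_right) fun m hm ↦ ?_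
  · rintro _ ⟨u, hu, rfl⟩
    simpa using t.toEnd_e_mem_eigenspace hu
  set U := map (toEnd K L M f) ((toEnd K L M h).eigenspace μ)
  have hU : U ≤ (toEnd K L M h).eigenspace (μ - 2) :=
    map_le_iff_le_comap.2 fun _ ↦ t.toEnd_f_mem_eigenspace
  have hmaps : ∀ u ∈ U, (toEnd K L M f ∘ₗ toEnd K L M e) u ∈ U := fun u hu ↦
    mem_map_of_mem (by simpa using t.toEnd_e_mem_eigenspace (hU hu))
  obtain ⟨u, hu, hfeu⟩ := (LinearMap.injOn_iff_surjOn hmaps).1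
    (LinearMap.injOn_of_disjoint_ker le_rfl (t.disjoint_map_toEnd_f_ker_toEnd_f_comp_toEnd_e μ))
    (mem_map_of_mem hm)
  refine mem_sup.2 ⟨_, mem_map_of_mem (hU hu), m - toEnd K L M e u, ⟨?_, ?_⟩, add_sub_cancel _ _⟩
  · simpa [sub_eq_zero] using hfeu.symm
  · exact sub_mem hm (by simpa using t.toEnd_e_mem_eigenspace (hU hu))

end IsSl2Triple

theorem weight_space_decomposition_general
    (K : Type*) [Field K] [CharZero K]
    (g : Type*) [LieRing g] [LieAlgebra K g] [FiniteDimensional K g]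
    (e h f : g) (he : e ≠ 0)
    (hhe : ⁅h, e⁆ = (2 : K) • e) (hhf : ⁅h, f⁆ = (-2 : K) • f) (hef : ⁅e, f⁆ = h) :
    (∀ j : ℤ,
      Submodule.map (LieAlgebra.ad K g e)
          (Module.End.eigenspace (LieAlgebra.ad K g h) ((j - 2 : ℤ) : K)) ⊔
        (LinearMap.ker (LieAlgebra.ad K g f) ⊓
          Module.End.eigenspace (LieAlgebra.ad K g h) (j : K)) =
        Module.End.eigenspace (LieAlgebra.ad K g h) (j : K) ∧
      Submodule.map (LieAlgebra.ad K g e)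
          (Module.End.eigenspace (LieAlgebra.ad K g h) ((j - 2 : ℤ) : K)) ⊓
        (LinearMap.ker (LieAlgebra.ad K g f) ⊓
          Module.End.eigenspace (LieAlgebra.ad K g h) (j : K)) = ⊥) ∧
    (∀ j : ℤ, 1 ≤ j →
      LinearMap.ker (LieAlgebra.ad K g f) ⊓
        Module.End.eigenspace (LieAlgebra.ad K g h) (j : K) = ⊥) := by
  have t : IsSl2Triple h e f :=
    { h_ne_zero := by rintro rfl; exact he (by simpa using hhe.symm)
      lie_e_f := hef
      lie_h_e_nsmul := by rw [hhe, ofNat_smul_eq_nsmul]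
      lie_h_f_nsmul := by rw [hhf, neg_smul, ofNat_smul_eq_nsmul] }
  refine ⟨fun j ↦ ⟨?_, ?_⟩, fun j hj ↦ ?_⟩
  · push_cast
    exact t.map_toEnd_e_sup_ker_toEnd_f_inf_eigenspace (j : K)
  · exact eq_bot_iff.2 <| (inf_le_inf_left _ inf_le_left).trans
      (t.map_toEnd_e_inf_ker_toEnd_f_eq_bot _).le
  · refine t.ker_toEnd_f_inf_eigenspace_eq_bot fun n hn ↦ ?_
    have : ((j + n : ℤ) : K) = 0 := by push_cast; linear_combination hn
    exact absurd (Int.cast_eq_zero.1 this) (by omega)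

/-- For every `j ∈ ℤ` the weight space `g(j)` decomposes as the internal direct
sum `g(j) = [e, g(j-2)] ⊕ (ker(ad f) ∩ g(j))`; in particular `ker(ad f) ∩ g(j) = 0` whenever
`j ≥ 1`. -/
theorem weight_space_decomposition
    (K : Type*) [Field K] [IsAlgClosed K] [CharZero K]
    (g : Type*) [LieRing g] [LieAlgebra K g] [FiniteDimensional K g]
    [LieAlgebra.IsSemisimple K g]
    (e h f : g) (he : e ≠ 0)
    (hhe : ⁅h, e⁆ = (2 : K) • e) (hhf : ⁅h, f⁆ = (-2 : K) • f) (hef : ⁅e, f⁆ = h) :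
    (∀ j : ℤ,
      Submodule.map (LieAlgebra.ad K g e)
          (Module.End.eigenspace (LieAlgebra.ad K g h) ((j - 2 : ℤ) : K)) ⊔
        (LinearMap.ker (LieAlgebra.ad K g f) ⊓
          Module.End.eigenspace (LieAlgebra.ad K g h) (j : K)) =
        Module.End.eigenspace (LieAlgebra.ad K g h) (j : K) ∧
      Submodule.map (LieAlgebra.ad K g e)
          (Module.End.eigenspace (LieAlgebra.ad K g h) ((j - 2 : ℤ) : K)) ⊓
        (LinearMap.ker (LieAlgebra.ad K g f) ⊓
          Module.End.eigenspace (LieAlgebra.ad K g h) (j : K)) = ⊥) ∧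
    (∀ j : ℤ, 1 ≤ j →
      LinearMap.ker (LieAlgebra.ad K g f) ⊓
        Module.End.eigenspace (LieAlgebra.ad K g h) (j : K) = ⊥) :=
  weight_space_decomposition_general K g e h f he hhe hhf hef
end

section
/- Let l ⊆ g(-1) be any subspace isotropic for the restriction of ω_χ to g(-1), and set m := l ⊕ ⊕_{i ≤ -2} g(i). Then m is a Lie subalgebra of g, every element of m is ad-nilpotent, and χ vanishes on [m,m] (so χ restricts to a Lie algebra character of m). -/
/-!
The integer eigenvalues of `ad h` grade `g` additively under the bracket, so
`m ⊆ ⊕_{i ≤ -1} g(i)` is closed under brackets and `[m, m] ⊆ [l, l] + ⊕_{i ≤ -3} g(i)`.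
By invariance of the Killing form, `χ = κ(e, ·)` kills every `g(i)` with `i ≠ -2`, and it kills
`[l, l]` by isotropy. For nilpotency, `ad x` with `x ∈ ⊕_{i ≤ -1} g(i)` lowers every generalized
eigenvalue of `ad h` by a positive integer; as `ad h` has finitely many of them, some power of
`ad x` kills each generalized eigenspace, and these span `g` since `K` is algebraically closed.
-/

namespace Module.End

variable {K V : Type*} [Field K] [AddCommGroup V] [Module K V]

def maxGenEigenspaceBelow (D : End K V) (μ : K) : Submodule K V :=
  ⨆ n : ℕ, D.maxGenEigenspace (μ - n)

lemma maxGenEigenspace_le_maxGenEigenspaceBelow (D : End K V) {μ ν : K} (n : ℕ)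
    (h : ν = μ - n) : D.maxGenEigenspace ν ≤ D.maxGenEigenspaceBelow μ :=
  h ▸ le_iSup (fun n : ℕ => D.maxGenEigenspace (μ - n)) n

lemma maxGenEigenspaceBelow_sub_natCast_le (D : End K V) (μ : K) (n : ℕ) :
    D.maxGenEigenspaceBelow (μ - n) ≤ D.maxGenEigenspaceBelow μ :=
  iSup_le fun k => D.maxGenEigenspace_le_maxGenEigenspaceBelow (n + k) (by push_cast; ring)

lemma mapsTo_maxGenEigenspaceBelow {D T : End K V}
    (hT : ∀ μ, ∀ v ∈ D.maxGenEigenspace μ, T v ∈ D.maxGenEigenspaceBelow (μ - 1))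
    {μ : K} {v : V} (hv : v ∈ D.maxGenEigenspaceBelow μ) :
    T v ∈ D.maxGenEigenspaceBelow (μ - 1) := by
  induction hv using Submodule.iSup_induction' with
  | mem n v hv =>
    have := hT _ v hv
    rw [sub_right_comm] at this
    exact D.maxGenEigenspaceBelow_sub_natCast_le _ n this
  | zero => simp
  | add v w _ _ hv hw => rw [map_add]; exact add_mem hv hw

lemma exists_maxGenEigenspaceBelow_eq_bot [CharZero K] [FiniteDimensional K V]
    (D : End K V) (μ : K) : ∃ N : ℕ, D.maxGenEigenspaceBelow (μ - N) = ⊥ := by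
  have hfin : {n : ℕ | D.maxGenEigenspace (μ - n) ≠ ⊥}.Finite :=
    (WellFoundedGT.finite_ne_bot_of_iSupIndep D.independent_maxGenEigenspace).preimage
      fun a _ b _ hab => by simpa using hab
  obtain ⟨N, hN⟩ := hfin.bddAbove
  refine ⟨N + 1, iSup_eq_bot.mpr fun n => ?_⟩
  by_contra hne
  have := hN (show N + 1 + n ∈ _ by simpa [sub_sub, add_assoc] using hne)
  omega

lemma isNilpotent_of_mapsTo_maxGenEigenspaceBelow [IsAlgClosed K] [CharZero K]
    [FiniteDimensional K V] {D T : End K V}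
    (hT : ∀ μ, ∀ v ∈ D.maxGenEigenspace μ, T v ∈ D.maxGenEigenspaceBelow (μ - 1)) :
    IsNilpotent T := by
  have hpow : ∀ μ (n : ℕ), ∀ v ∈ D.maxGenEigenspace μ,
      (T ^ n) v ∈ D.maxGenEigenspaceBelow (μ - n) := by
    intro μ n v hv
    induction n with
    | zero => simpa using D.maxGenEigenspace_le_maxGenEigenspaceBelow 0 (by simp) hv
    | succ n ih =>
      rw [pow_succ', mul_apply]
      simpa [sub_sub] using mapsTo_maxGenEigenspaceBelow hT ih
  refine isNilpotent_iff_of_finite.mpr fun v => ?_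
  have hv : v ∈ ⨆ μ, D.maxGenEigenspace μ := by rw [D.iSup_maxGenEigenspace_eq_top]; trivial
  induction hv using Submodule.iSup_induction' with
  | mem μ v hv =>
    obtain ⟨N, hN⟩ := D.exists_maxGenEigenspaceBelow_eq_bot μ
    exact ⟨N, by simpa [hN] using hpow μ N v hv⟩
  | zero => exact ⟨0, map_zero _⟩
  | add v w _ _ hv hw =>
    obtain ⟨n₁, hn₁⟩ := hv
    obtain ⟨n₂, hn₂⟩ := hw
    refine ⟨max n₁ n₂, ?_⟩
    rw [map_add, pow_map_zero_of_le le_sup_left hn₁, pow_map_zero_of_le le_sup_right hn₂,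
      add_zero]

end Module.End

namespace LieAlgebra

variable (K : Type*) {g : Type*} [Field K] [LieRing g] [LieAlgebra K g]

def adEigenspacesLE (h : g) (p : ℤ) : Submodule K g :=
  ⨆ i : ℤ, ⨆ _ : i ≤ p, Module.End.eigenspace (ad K g h) (i : K)

variable {K}

lemma eigenspace_le_adEigenspacesLE (h : g) {i p : ℤ} (hip : i ≤ p) :
    Module.End.eigenspace (ad K g h) (i : K) ≤ adEigenspacesLE K h p :=
  le_iSup₂ (f := fun i (_ : i ≤ p) => Module.End.eigenspace (ad K g h) (i : K)) i hip

lemma adEigenspacesLE_mono (h : g) {p q : ℤ} (hpq : p ≤ q) :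
    adEigenspacesLE K h p ≤ adEigenspacesLE K h q :=
  iSup₂_le fun _ hi => eigenspace_le_adEigenspacesLE h (hi.trans hpq)

lemma lie_mem_eigenspace_ad {h x y : g} {a b : K}
    (hx : x ∈ Module.End.eigenspace (ad K g h) a)
    (hy : y ∈ Module.End.eigenspace (ad K g h) b) :
    ⁅x, y⁆ ∈ Module.End.eigenspace (ad K g h) (a + b) := by
  rw [Module.End.mem_eigenspace_iff, ad_apply] at hx hy ⊢
  rw [leibniz_lie, hx, hy, smul_lie, lie_smul, add_smul]

lemma lie_mem_adEigenspacesLE {h x y : g} {p q r : ℤ} (hpq : p + q ≤ r)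
    (hx : x ∈ adEigenspacesLE K h p) (hy : y ∈ adEigenspacesLE K h q) :
    ⁅x, y⁆ ∈ adEigenspacesLE K h r := by
  have : Submodule.map₂ (LieModule.toEnd K g g) (adEigenspacesLE K h p)
      (adEigenspacesLE K h q) ≤ adEigenspacesLE K h r := by
    simp only [adEigenspacesLE, Submodule.map₂_iSup_left, Submodule.map₂_iSup_right,
      iSup_le_iff, Submodule.map₂_le]
    intro j hj i hi x hx y hy
    change ⁅x, y⁆ ∈ _
    refine eigenspace_le_adEigenspacesLE h (by omega : i + j ≤ r) ?_
    exact_mod_cast lie_mem_eigenspace_ad hx hy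
  exact this (Submodule.apply_mem_map₂ _ hx hy)

lemma killingForm_eq_zero_of_mem_eigenspace_ad {h x z : g} {a c : K} (hac : a + c ≠ 0)
    (hx : x ∈ Module.End.eigenspace (ad K g h) a)
    (hz : z ∈ Module.End.eigenspace (ad K g h) c) :
    killingForm K g x z = 0 := by
  rw [Module.End.mem_eigenspace_iff, ad_apply] at hx hz
  have hinv := LieModule.traceForm_apply_lie_apply K g g x h z
  rw [← lie_skew, hx, hz, map_neg, map_smul, map_smul, LinearMap.neg_apply,
    LinearMap.smul_apply, smul_eq_mul, smul_eq_mul] at hinv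
  have : (a + c) * killingForm K g x z = 0 := by linear_combination -hinv
  exact (mul_eq_zero.mp this).resolve_left hac

lemma killingForm_eq_zero_of_mem_adEigenspacesLE [CharZero K] {h e z : g}
    (hhe : ⁅h, e⁆ = (2 : K) • e) {p : ℤ} (hp : p < -2) (hz : z ∈ adEigenspacesLE K h p) :
    killingForm K g e z = 0 := by
  have he : e ∈ Module.End.eigenspace (ad K g h) 2 := by
    rw [Module.End.mem_eigenspace_iff, ad_apply, hhe]
  suffices adEigenspacesLE K h p ≤ LinearMap.ker (killingForm K g e) from this hz
  refine iSup₂_le fun i hi z hz => ?_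
  refine killingForm_eq_zero_of_mem_eigenspace_ad ?_ he hz
  exact_mod_cast (by omega : 2 + i ≠ 0)

lemma isNilpotent_ad_of_mem_adEigenspacesLE [IsAlgClosed K] [CharZero K] [FiniteDimensional K g]
    {h x : g} (hx : x ∈ adEigenspacesLE K h (-1)) : IsNilpotent (ad K g x) := by
  refine Module.End.isNilpotent_of_mapsTo_maxGenEigenspaceBelow (D := ad K g h) ?_
  intro μ v hv
  rw [adEigenspacesLE, iSup_subtype'] at hx
  induction hx using Submodule.iSup_induction' with
  | mem i x hx =>
    have hx' := Module.End.genEigenspace_le_maximal _ _ 1 hx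
    refine (ad K g h).maxGenEigenspace_le_maxGenEigenspaceBelow (-1 - i : ℤ).toNat ?_
      (LieModule.lie_mem_maxGenEigenspace_toEnd hx' hv)
    have := i.2
    rw [← Int.cast_natCast, Int.toNat_of_nonneg (by omega)]
    push_cast; ring
  | zero => simp
  | add x y _ _ hx hy => rw [map_add, LinearMap.add_apply]; exact add_mem hx hy

lemma exists_lie_eq_lie_add_of_mem_sup_adEigenspacesLE {h : g} {l : Submodule K g}
    (hl : l ≤ adEigenspacesLE K h (-1)) {x y : g}
    (hx : x ∈ l ⊔ adEigenspacesLE K h (-2)) (hy : y ∈ l ⊔ adEigenspacesLE K h (-2)) :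
    ∃ xl ∈ l, ∃ yl ∈ l, ∃ r ∈ adEigenspacesLE K h (-3), ⁅x, y⁆ = ⁅xl, yl⁆ + r := by
  obtain ⟨xl, hxl, xn, hxn, rfl⟩ := Submodule.mem_sup.mp hx
  obtain ⟨yl, hyl, yn, hyn, rfl⟩ := Submodule.mem_sup.mp hy
  refine ⟨xl, hxl, yl, hyl, ⁅xl, yn⁆ + ⁅xn, yl⁆ + ⁅xn, yn⁆, ?_, ?_⟩
  · refine add_mem (add_mem ?_ ?_) ?_
    · exact lie_mem_adEigenspacesLE (by norm_num) (hl hxl) hyn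
    · exact lie_mem_adEigenspacesLE (by norm_num) hxn (hl hyl)
    · exact lie_mem_adEigenspacesLE (by norm_num) hxn hyn
  · rw [add_lie, lie_add, lie_add]
    abel

end LieAlgebra

open LieAlgebra

theorem m_subalgebra_nilpotent_chi_character_general
    (K : Type*) [Field K] [IsAlgClosed K] [CharZero K]
    (g : Type*) [LieRing g] [LieAlgebra K g] [FiniteDimensional K g]
    (e h : g)
    (hhe : ⁅h, e⁆ = (2 : K) • e)
    (l : Submodule K g)
    (hl : l ≤ Module.End.eigenspace (LieAlgebra.ad K g h) ((-1 : ℤ) : K))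
    (hiso : ∀ x ∈ l, ∀ y ∈ l, killingForm K g e ⁅x, y⁆ = 0)
    (m : Submodule K g)
    (hm : m = l ⊔ ⨆ i : ℤ, ⨆ _ : i ≤ -2,
      Module.End.eigenspace (LieAlgebra.ad K g h) (i : K)) :
    (∀ x ∈ m, ∀ y ∈ m, ⁅x, y⁆ ∈ m) ∧
    (∀ x ∈ m, IsNilpotent (LieAlgebra.ad K g x)) ∧
    (∀ x ∈ m, ∀ y ∈ m, killingForm K g e ⁅x, y⁆ = 0) := by
  change m = l ⊔ adEigenspacesLE K h (-2) at hm
  subst hm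
  have hlG : l ≤ adEigenspacesLE K h (-1) := hl.trans (eigenspace_le_adEigenspacesLE h le_rfl)
  refine ⟨fun x hx y hy => ?_, fun x hx => ?_, fun x hx y hy => ?_⟩
  · obtain ⟨xl, hxl, yl, hyl, r, hr, hxy⟩ :=
      exists_lie_eq_lie_add_of_mem_sup_adEigenspacesLE hlG hx hy
    have hxlyl : ⁅xl, yl⁆ ∈ adEigenspacesLE K h (-2) := eigenspace_le_adEigenspacesLE h le_rfl
      (by exact_mod_cast lie_mem_eigenspace_ad (hl hxl) (hl hyl))
    rw [hxy]
    exact add_mem (Submodule.mem_sup_right hxlyl)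
      (Submodule.mem_sup_right (adEigenspacesLE_mono h (by norm_num) hr))
  · exact isNilpotent_ad_of_mem_adEigenspacesLE
      (sup_le hlG (adEigenspacesLE_mono h (by norm_num)) hx)
  · obtain ⟨xl, hxl, yl, hyl, r, hr, hxy⟩ :=
      exists_lie_eq_lie_add_of_mem_sup_adEigenspacesLE hlG hx hy
    rw [hxy, map_add, hiso xl hxl yl hyl,
      killingForm_eq_zero_of_mem_adEigenspacesLE hhe (by norm_num) hr, add_zero]

/-- Let `l ⊆ g(-1)` be any subspace isotropic for the restriction of `ω_χ` to
`g(-1)`, and set `m := l ⊕ ⊕_{i ≤ -2} g(i)`. Then `m` is a Lie subalgebra of `g`, every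
element of `m` is ad-nilpotent, and `χ` vanishes on `[m, m]` (so `χ` restricts to a Lie
algebra character of `m`). -/
theorem m_subalgebra_nilpotent_chi_character
    (K : Type*) [Field K] [IsAlgClosed K] [CharZero K]
    (g : Type*) [LieRing g] [LieAlgebra K g] [FiniteDimensional K g]
    [LieAlgebra.IsSemisimple K g]
    (e h f : g) (he : e ≠ 0)
    (hhe : ⁅h, e⁆ = (2 : K) • e) (hhf : ⁅h, f⁆ = (-2 : K) • f) (hef : ⁅e, f⁆ = h)
    (l : Submodule K g)
    (hl : l ≤ Module.End.eigenspace (LieAlgebra.ad K g h) ((-1 : ℤ) : K))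
    (hiso : ∀ x ∈ l, ∀ y ∈ l, killingForm K g e ⁅x, y⁆ = 0)
    (m : Submodule K g)
    (hm : m = l ⊔ ⨆ i : ℤ, ⨆ _ : i ≤ -2,
      Module.End.eigenspace (LieAlgebra.ad K g h) (i : K)) :
    (∀ x ∈ m, ∀ y ∈ m, ⁅x, y⁆ ∈ m) ∧
    (∀ x ∈ m, IsNilpotent (LieAlgebra.ad K g x)) ∧
    (∀ x ∈ m, ∀ y ∈ m, killingForm K g e ⁅x, y⁆ = 0) :=
  m_subalgebra_nilpotent_chi_character_general K g e h hhe l hl hiso m hm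
end

section
/- For every ξ ∈ m the adjoint action ad ξ : u ↦ ξu − uξ on U preserves the left ideal U·m_χ, i.e. [ξ, U·m_χ] ⊆ U·m_χ; consequently ad m descends to an action of m on the quotient U/U·m_χ. -/
/-!
The map `ad ξ` is a derivation of `U`, so it preserves the left ideal generated by a set `S` as
soon as it sends `S` into that ideal. For `ξ, η ∈ m` one has `[ξ, η - χ(η)] = [ξ, η] - χ([ξ, η])`
provided `χ([ξ, η]) = 0`, and this is again a generator as soon as `[ξ, η] ∈ m`. Both facts come
from the grading by `ad h`: `[g(a), g(b)] ⊆ g(a + b)`, the Killing form pairs `e ∈ g(2)` only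
with `g(-2)`, and the only part of `[m, m]` in `g(-2)` is `[l, l]`, on which `χ` vanishes because
`l` is isotropic.
-/

open Module.End LieAlgebra Submodule

theorem Submodule.mul_sub_mul_mem_span_of_forall_mem {A : Type*} [Ring A] {S : Set A} {x : A}
    (hS : ∀ s ∈ S, x * s - s * x ∈ span A S) {a : A} (ha : a ∈ span A S) :
    x * a - a * x ∈ span A S := by
  induction ha using span_induction with
  | mem s hs => exact hS s hs
  | zero => simp
  | add u v _ _ hu hv =>
    convert add_mem hu hv using 1
    noncomm_ring
  | smul u v hv ihv =>
    have hleibniz : x * (u * v) - u * v * x = (x * u - u * x) * v + u * (x * v - v * x) := by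
      noncomm_ring
    rw [smul_eq_mul, hleibniz]
    exact add_mem (smul_mem _ _ hv) (smul_mem _ _ ihv)

namespace UniversalEnvelopingAlgebra

variable {R L : Type*} [CommRing R] [LieRing L] [LieAlgebra R L]

theorem ι_mul_sub_mul_ι (x y : L) : ι R x * ι R y - ι R y * ι R x = ι R ⁅x, y⁆ := by
  let _ : LieRing (UniversalEnvelopingAlgebra R L) := LieRing.ofAssociativeRing
  rw [LieHom.map_lie, Ring.lie_def]

theorem ι_mul_sub_mul_ι_mem_span_ι_sub_algebraMap {m : Submodule R L} {χ : L →ₗ[R] R}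
    (hm : ∀ x ∈ m, ∀ y ∈ m, ⁅x, y⁆ ∈ m ∧ χ ⁅x, y⁆ = 0) {ξ : L} (hξ : ξ ∈ m)
    {a : UniversalEnvelopingAlgebra R L}
    (ha : a ∈ span (UniversalEnvelopingAlgebra R L)
      {u | ∃ η ∈ m, u = ι R η - algebraMap R _ (χ η)}) :
    ι R ξ * a - a * ι R ξ ∈ span (UniversalEnvelopingAlgebra R L)
      {u | ∃ η ∈ m, u = ι R η - algebraMap R _ (χ η)} := by
  refine mul_sub_mul_mem_span_of_forall_mem ?_ ha
  rintro _ ⟨η, hη, rfl⟩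
  obtain ⟨hξη, hχ⟩ := hm ξ hξ η hη
  refine subset_span ⟨⁅ξ, η⁆, hξη, ?_⟩
  rw [hχ, map_zero, sub_zero, ← ι_mul_sub_mul_ι, mul_sub, sub_mul, Algebra.commutes]
  abel

end UniversalEnvelopingAlgebra

section Grading

variable {K g : Type*} [Field K] [LieRing g] [LieAlgebra K g]

theorem lie_mem_eigenspace_ad_add {h x y : g} {a b : K}
    (hx : x ∈ eigenspace (ad K g h) a) (hy : y ∈ eigenspace (ad K g h) b) :
    ⁅x, y⁆ ∈ eigenspace (ad K g h) (a + b) := by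
  rw [mem_eigenspace_iff, ad_apply] at *
  rw [leibniz_lie, hx, hy, smul_lie, lie_smul, add_smul]

theorem LieModule.traceForm_eq_zero_of_mem_eigenspace_ad (M : Type*) [AddCommGroup M]
    [Module K M] [LieRingModule g M] [LieModule K g M] {h x y : g} {a b : K} (hab : a + b ≠ 0)
    (hx : x ∈ eigenspace (ad K g h) a) (hy : y ∈ eigenspace (ad K g h) b) :
    LieModule.traceForm K g M x y = 0 := by
  rw [mem_eigenspace_iff, ad_apply] at hx hy
  have hinv := LieModule.traceForm_apply_lie_apply' K g M h x y
  rw [hx, hy, map_smul, map_smul, LinearMap.smul_apply, smul_eq_mul, smul_eq_mul] at hinv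
  have : (a + b) * LieModule.traceForm K g M x y = 0 := by linear_combination hinv
  exact (mul_eq_zero.mp this).resolve_left hab

variable [CharZero K]

theorem lie_mem_and_killingForm_eq_zero_of_mem_eigenspace {e h x y : g}
    (hhe : ⁅h, e⁆ = (2 : K) • e) {a b : ℤ} (hab : a + b ≤ -3)
    (hx : x ∈ eigenspace (ad K g h) (a : K)) (hy : y ∈ eigenspace (ad K g h) (b : K)) :
    ⁅x, y⁆ ∈ (⨆ i : ℤ, ⨆ _ : i ≤ -2, eigenspace (ad K g h) (i : K)) ∧
      killingForm K g e ⁅x, y⁆ = 0 := by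
  have hxy : ⁅x, y⁆ ∈ eigenspace (ad K g h) ((a + b : ℤ) : K) := by
    push_cast
    exact lie_mem_eigenspace_ad_add hx hy
  have he : e ∈ eigenspace (ad K g h) (2 : K) := by rwa [mem_eigenspace_iff, ad_apply]
  refine ⟨mem_iSup_of_mem (a + b) (mem_iSup_of_mem (by omega) hxy), ?_⟩
  refine LieModule.traceForm_eq_zero_of_mem_eigenspace_ad g ?_ he hxy
  exact_mod_cast (show 2 + (a + b) ≠ 0 by omega)

theorem lie_mem_and_killingForm_eq_zero_of_mem_sup {e h : g} (hhe : ⁅h, e⁆ = (2 : K) • e)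
    {l : Submodule K g} (hl : l ≤ eigenspace (ad K g h) ((-1 : ℤ) : K))
    (hiso : ∀ x ∈ l, ∀ y ∈ l, killingForm K g e ⁅x, y⁆ = 0) {x y : g}
    (hx : x ∈ l ⊔ ⨆ i : ℤ, ⨆ _ : i ≤ -2, eigenspace (ad K g h) (i : K))
    (hy : y ∈ l ⊔ ⨆ i : ℤ, ⨆ _ : i ≤ -2, eigenspace (ad K g h) (i : K)) :
    ⁅x, y⁆ ∈ l ⊔ (⨆ i : ℤ, ⨆ _ : i ≤ -2, eigenspace (ad K g h) (i : K)) ∧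
      killingForm K g e ⁅x, y⁆ = 0 := by
  set n := ⨆ i : ℤ, ⨆ _ : i ≤ -2, eigenspace (ad K g h) (i : K)
  set T := (l ⊔ n) ⊓ LinearMap.ker (killingForm K g e)
  let B : g →ₗ[K] g →ₗ[K] g := LinearMap.mk₂ K (⁅·, ·⁆) add_lie smul_lie lie_add lie_smul
  suffices map₂ B (l ⊔ n) (l ⊔ n) ≤ T from this (apply_mem_map₂ B hx hy)
  have hgraded : ∀ a b : ℤ, a ≤ -1 → b ≤ -1 → a + b ≤ -3 →
      map₂ B (eigenspace (ad K g h) (a : K)) (eigenspace (ad K g h) (b : K)) ≤ T := by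
    refine fun a b _ _ hab => map₂_le.2 fun x hx y hy => ?_
    obtain ⟨hn, hχ⟩ := lie_mem_and_killingForm_eq_zero_of_mem_eigenspace hhe hab hx hy
    exact ⟨mem_sup_right hn, hχ⟩
  have hll : map₂ B l l ≤ T := by
    refine map₂_le.2 fun x hx y hy => ⟨mem_sup_right ?_, hiso x hx y hy⟩
    have hxy := lie_mem_eigenspace_ad_add (hl hx) (hl hy)
    rw [← Int.cast_add] at hxy
    exact mem_iSup_of_mem (-2) (mem_iSup_of_mem le_rfl hxy)
  simp only [n, map₂_sup_left, map₂_sup_right, map₂_iSup_left, map₂_iSup_right, sup_le_iff,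
    iSup_le_iff]
  refine ⟨⟨hll, fun i hi => ?_⟩, fun j hj => ⟨?_, fun i hi => ?_⟩⟩
  · exact (map₂_le_map₂_right hl).trans (hgraded _ _ (by omega) le_rfl (by omega))
  · exact (map₂_le_map₂_left hl).trans (hgraded _ _ le_rfl (by omega) (by omega))
  · exact hgraded _ _ (by omega) (by omega) (by omega)

end Grading

theorem ad_m_preserves_left_ideal_general
    (K : Type*) [Field K] [CharZero K]
    (g : Type*) [LieRing g] [LieAlgebra K g]
    (e h : g)
    (hhe : ⁅h, e⁆ = (2 : K) • e)
    (l : Submodule K g)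
    (hl : l ≤ Module.End.eigenspace (LieAlgebra.ad K g h) ((-1 : ℤ) : K))
    (hiso : ∀ x ∈ l, ∀ y ∈ l, killingForm K g e ⁅x, y⁆ = 0)
    (m : Submodule K g)
    (hm : m = l ⊔ ⨆ i : ℤ, ⨆ _ : i ≤ -2,
      Module.End.eigenspace (LieAlgebra.ad K g h) (i : K))
    -- the left ideal `U·m_χ` generated by `m_χ = {ξ − χ(ξ)·1 : ξ ∈ m}`
    (I : Submodule (UniversalEnvelopingAlgebra K g) (UniversalEnvelopingAlgebra K g))
    (hI : I = Submodule.span (UniversalEnvelopingAlgebra K g)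
      {u : UniversalEnvelopingAlgebra K g | ∃ ξ ∈ m,
        u = UniversalEnvelopingAlgebra.ι K ξ -
          algebraMap K (UniversalEnvelopingAlgebra K g) (killingForm K g e ξ)}) :
    ∀ ξ ∈ m, ∀ a ∈ I,
      UniversalEnvelopingAlgebra.ι K ξ * a - a * UniversalEnvelopingAlgebra.ι K ξ ∈ I := by
  subst hm hI
  intro ξ hξ a ha
  exact UniversalEnvelopingAlgebra.ι_mul_sub_mul_ι_mem_span_ι_sub_algebraMap
    (fun x hx y hy => lie_mem_and_killingForm_eq_zero_of_mem_sup hhe hl hiso hx hy) hξ ha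

/-- For every `ξ ∈ m` the adjoint action `ad ξ : u ↦ ξu − uξ` on `U` preserves
the left ideal `U·m_χ`, i.e. `[ξ, U·m_χ] ⊆ U·m_χ`; consequently `ad m` descends to an action
of `m` on the quotient `U/U·m_χ`. -/
theorem ad_m_preserves_left_ideal
    (K : Type*) [Field K] [IsAlgClosed K] [CharZero K]
    (g : Type*) [LieRing g] [LieAlgebra K g] [FiniteDimensional K g]
    [LieAlgebra.IsSemisimple K g]
    (e h f : g) (he : e ≠ 0)
    (hhe : ⁅h, e⁆ = (2 : K) • e) (hhf : ⁅h, f⁆ = (-2 : K) • f) (hef : ⁅e, f⁆ = h)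
    (l : Submodule K g)
    (hl : l ≤ Module.End.eigenspace (LieAlgebra.ad K g h) ((-1 : ℤ) : K))
    (hiso : ∀ x ∈ l, ∀ y ∈ l, killingForm K g e ⁅x, y⁆ = 0)
    (hmax : ∀ l' : Submodule K g,
      l' ≤ Module.End.eigenspace (LieAlgebra.ad K g h) ((-1 : ℤ) : K) →
      (∀ x ∈ l', ∀ y ∈ l', killingForm K g e ⁅x, y⁆ = 0) → l ≤ l' → l' = l)
    (m : Submodule K g)
    (hm : m = l ⊔ ⨆ i : ℤ, ⨆ _ : i ≤ -2,
      Module.End.eigenspace (LieAlgebra.ad K g h) (i : K))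
    -- the left ideal `U·m_χ` generated by `m_χ = {ξ − χ(ξ)·1 : ξ ∈ m}`
    (I : Submodule (UniversalEnvelopingAlgebra K g) (UniversalEnvelopingAlgebra K g))
    (hI : I = Submodule.span (UniversalEnvelopingAlgebra K g)
      {u : UniversalEnvelopingAlgebra K g | ∃ ξ ∈ m,
        u = UniversalEnvelopingAlgebra.ι K ξ -
          algebraMap K (UniversalEnvelopingAlgebra K g) (killingForm K g e ξ)}) :
    ∀ ξ ∈ m, ∀ a ∈ I,
      UniversalEnvelopingAlgebra.ι K ξ * a - a * UniversalEnvelopingAlgebra.ι K ξ ∈ I :=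
  ad_m_preserves_left_ideal_general K g e h hhe l hl hiso m hm I hI
end

section
/- The set N := {a ∈ U : [ξ,a] ∈ U·m_χ for all ξ ∈ m} is a unital subalgebra of U, and N ∩ U·m_χ is a two-sided ideal of N; hence the quotient N/(N ∩ U·m_χ) — the W-algebra U(g,e) = (U/U·m_χ)^{ad m} — carries a well-defined associative algebra structure induced from the multiplication of U. -/
/-- The set `N := {a ∈ U : [ξ, a] ∈ U·m_χ for all ξ ∈ m}` is a unital
subalgebra of `U`, and `N ∩ U·m_χ` is a two-sided ideal of `N`; hence the quotient
`N/(N ∩ U·m_χ)` — the W-algebra `U(g,e) = (U/U·m_χ)^{ad m}` — carries a well-defined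
associative algebra structure induced from the multiplication of `U`. -/
theorem invariants_subalgebra_and_ideal
    (K : Type*) [Field K] [IsAlgClosed K] [CharZero K]
    (g : Type*) [LieRing g] [LieAlgebra K g] [FiniteDimensional K g]
    [LieAlgebra.IsSemisimple K g]
    (e h f : g) (he : e ≠ 0)
    (hhe : ⁅h, e⁆ = (2 : K) • e) (hhf : ⁅h, f⁆ = (-2 : K) • f) (hef : ⁅e, f⁆ = h)
    (l : Submodule K g)
    (hl : l ≤ Module.End.eigenspace (LieAlgebra.ad K g h) ((-1 : ℤ) : K))
    (hiso : ∀ x ∈ l, ∀ y ∈ l, killingForm K g e ⁅x, y⁆ = 0)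
    (hmax : ∀ l' : Submodule K g,
      l' ≤ Module.End.eigenspace (LieAlgebra.ad K g h) ((-1 : ℤ) : K) →
      (∀ x ∈ l', ∀ y ∈ l', killingForm K g e ⁅x, y⁆ = 0) → l ≤ l' → l' = l)
    (m : Submodule K g)
    (hm : m = l ⊔ ⨆ i : ℤ, ⨆ _ : i ≤ -2,
      Module.End.eigenspace (LieAlgebra.ad K g h) (i : K))
    (I : Submodule (UniversalEnvelopingAlgebra K g) (UniversalEnvelopingAlgebra K g))
    (hI : I = Submodule.span (UniversalEnvelopingAlgebra K g)
      {u : UniversalEnvelopingAlgebra K g | ∃ ξ ∈ m,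
        u = UniversalEnvelopingAlgebra.ι K ξ -
          algebraMap K (UniversalEnvelopingAlgebra K g) (killingForm K g e ξ)})
    (N : Set (UniversalEnvelopingAlgebra K g))
    (hN : N = {a : UniversalEnvelopingAlgebra K g | ∀ ξ ∈ m,
      UniversalEnvelopingAlgebra.ι K ξ * a - a * UniversalEnvelopingAlgebra.ι K ξ ∈ I}) :
    -- `N` is a unital subalgebra of `U`:
    ((1 : UniversalEnvelopingAlgebra K g) ∈ N ∧
     (∀ a ∈ N, ∀ b ∈ N, a + b ∈ N) ∧
     (∀ a ∈ N, ∀ b ∈ N, a * b ∈ N) ∧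
     (∀ (c : K), ∀ a ∈ N, c • a ∈ N)) ∧
    -- `N ∩ U·m_χ` is a two-sided ideal of `N`:
    (∀ a ∈ N, ∀ b ∈ N ∩ (I : Set (UniversalEnvelopingAlgebra K g)),
      a * b ∈ N ∩ (I : Set (UniversalEnvelopingAlgebra K g)) ∧
      b * a ∈ N ∩ (I : Set (UniversalEnvelopingAlgebra K g))) := by

  subst hI hN
  -- Key lemma: for b ∈ N and x ∈ I, x * b ∈ I.
  have key : ∀ b : UniversalEnvelopingAlgebra K g,
      (∀ ξ ∈ m, UniversalEnvelopingAlgebra.ι K ξ * b - b * UniversalEnvelopingAlgebra.ι K ξ ∈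
        Submodule.span (UniversalEnvelopingAlgebra K g)
          {u : UniversalEnvelopingAlgebra K g | ∃ ξ ∈ m,
            u = UniversalEnvelopingAlgebra.ι K ξ -
              algebraMap K (UniversalEnvelopingAlgebra K g) (killingForm K g e ξ)}) →
      ∀ x ∈ Submodule.span (UniversalEnvelopingAlgebra K g)
          {u : UniversalEnvelopingAlgebra K g | ∃ ξ ∈ m,
            u = UniversalEnvelopingAlgebra.ι K ξ -
              algebraMap K (UniversalEnvelopingAlgebra K g) (killingForm K g e ξ)},
      x * b ∈ Submodule.span (UniversalEnvelopingAlgebra K g)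
          {u : UniversalEnvelopingAlgebra K g | ∃ ξ ∈ m,
            u = UniversalEnvelopingAlgebra.ι K ξ -
              algebraMap K (UniversalEnvelopingAlgebra K g) (killingForm K g e ξ)} := by
    intro b hb x hx
    set S : Set (UniversalEnvelopingAlgebra K g) :=
      {u : UniversalEnvelopingAlgebra K g | ∃ ξ ∈ m,
        u = UniversalEnvelopingAlgebra.ι K ξ -
          algebraMap K (UniversalEnvelopingAlgebra K g) (killingForm K g e ξ)} with hS
    induction hx using Submodule.span_induction with
    | mem u hu =>
      obtain ⟨ξ, hξ, rfl⟩ := hu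
      have h1 : (UniversalEnvelopingAlgebra.ι K ξ -
          algebraMap K (UniversalEnvelopingAlgebra K g) (killingForm K g e ξ)) * b =
          (UniversalEnvelopingAlgebra.ι K ξ * b - b * UniversalEnvelopingAlgebra.ι K ξ) +
          b * (UniversalEnvelopingAlgebra.ι K ξ -
            algebraMap K (UniversalEnvelopingAlgebra K g) (killingForm K g e ξ)) := by
        rw [mul_sub, sub_mul, Algebra.commutes]
        abel
      rw [h1]
      refine Submodule.add_mem _ (hb ξ hξ) ?_
      have hgen : (UniversalEnvelopingAlgebra.ι K ξ -
          algebraMap K (UniversalEnvelopingAlgebra K g) (killingForm K g e ξ)) ∈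
          Submodule.span (UniversalEnvelopingAlgebra K g) S :=
        Submodule.subset_span ⟨ξ, hξ, rfl⟩
      simpa [smul_eq_mul] using Submodule.smul_mem _ b hgen
    | zero => simpa using Submodule.zero_mem _
    | add y z hy hz ihy ihz =>
      rw [add_mul]; exact Submodule.add_mem _ ihy ihz
    | smul c y hy ihy =>
      rw [smul_eq_mul, mul_assoc]
      simpa [smul_eq_mul] using Submodule.smul_mem _ c ihy
  constructor
  · refine ⟨?_, ?_, ?_, ?_⟩
    · intro ξ hξ; simp
    · intro a ha b hb ξ hξ
      have : UniversalEnvelopingAlgebra.ι K ξ * (a + b) - (a + b) * UniversalEnvelopingAlgebra.ι K ξ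
          = (UniversalEnvelopingAlgebra.ι K ξ * a - a * UniversalEnvelopingAlgebra.ι K ξ)
          + (UniversalEnvelopingAlgebra.ι K ξ * b - b * UniversalEnvelopingAlgebra.ι K ξ) := by
        noncomm_ring
      rw [this]
      exact Submodule.add_mem _ (ha ξ hξ) (hb ξ hξ)
    · intro a ha b hb ξ hξ
      have : UniversalEnvelopingAlgebra.ι K ξ * (a * b) - (a * b) * UniversalEnvelopingAlgebra.ι K ξ
          = (UniversalEnvelopingAlgebra.ι K ξ * a - a * UniversalEnvelopingAlgebra.ι K ξ) * b
          + a * (UniversalEnvelopingAlgebra.ι K ξ * b - b * UniversalEnvelopingAlgebra.ι K ξ) := by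
        noncomm_ring
      rw [this]
      refine Submodule.add_mem _ (key b hb _ (ha ξ hξ)) ?_
      simpa [smul_eq_mul] using Submodule.smul_mem _ a (hb ξ hξ)
    · intro c a ha ξ hξ
      have : UniversalEnvelopingAlgebra.ι K ξ * (c • a) - (c • a) * UniversalEnvelopingAlgebra.ι K ξ
          = (algebraMap K (UniversalEnvelopingAlgebra K g) c) *
            (UniversalEnvelopingAlgebra.ι K ξ * a - a * UniversalEnvelopingAlgebra.ι K ξ) := by
        rw [mul_smul_comm, smul_mul_assoc, ← smul_sub, Algebra.smul_def]
      rw [this]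
      simpa [smul_eq_mul] using
        Submodule.smul_mem _ (algebraMap K (UniversalEnvelopingAlgebra K g) c) (ha ξ hξ)
  · rintro a ha b ⟨hbN, hbI⟩
    refine ⟨⟨?_, ?_⟩, ⟨?_, ?_⟩⟩
    · intro ξ hξ
      have : UniversalEnvelopingAlgebra.ι K ξ * (a * b) - (a * b) * UniversalEnvelopingAlgebra.ι K ξ
          = (UniversalEnvelopingAlgebra.ι K ξ * a - a * UniversalEnvelopingAlgebra.ι K ξ) * b
          + a * (UniversalEnvelopingAlgebra.ι K ξ * b - b * UniversalEnvelopingAlgebra.ι K ξ) := by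
        noncomm_ring
      rw [this]
      refine Submodule.add_mem _ (key b hbN _ (ha ξ hξ)) ?_
      simpa [smul_eq_mul] using Submodule.smul_mem _ a (hbN ξ hξ)
    · simpa [smul_eq_mul] using Submodule.smul_mem _ a hbI
    · intro ξ hξ
      have : UniversalEnvelopingAlgebra.ι K ξ * (b * a) - (b * a) * UniversalEnvelopingAlgebra.ι K ξ
          = (UniversalEnvelopingAlgebra.ι K ξ * b - b * UniversalEnvelopingAlgebra.ι K ξ) * a
          + b * (UniversalEnvelopingAlgebra.ι K ξ * a - a * UniversalEnvelopingAlgebra.ι K ξ) := by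
        noncomm_ring
      rw [this]
      refine Submodule.add_mem _ (key a ha _ (hbN ξ hξ)) ?_
      simpa [smul_eq_mul] using Submodule.smul_mem _ b (ha ξ hξ)
    · exact key a ha b hbI
end

section
/- The left U-module U/U·m_χ is a Whittaker module: for every u ∈ U there exists n ∈ ℕ such that (ξ_1 − χ(ξ_1))·(ξ_2 − χ(ξ_2))⋯(ξ_n − χ(ξ_n))·u ∈ U·m_χ for all ξ_1,…,ξ_n ∈ m. -/
/-!
For `t ∈ m_χ` and `u ∈ U` we have `t * u = ⁅t, u⁆ + u * t`, and `u * t` lies in the left ideal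
`U·m_χ`; so `t₁ ⋯ tₙ * u` is congruent to an `n`-fold iterated bracket of `u`, and it suffices
that `ad m` acts locally nilpotently on `U`. As the brackets act by derivations, this reduces to
the generators `ι x`, i.e. to the local nilpotence of `ad m` on `g`. That holds because `m` is
spanned by `ad h`-eigenvectors of negative integer eigenvalue, bracketing with which lowers
generalized `ad h`-eigenvalues by a positive integer, while `ad h` has only finitely many
eigenvalues.
-/

section IteratedBracketKernel

variable (R : Type*) {L : Type*} (M : Type*) [CommRing R] [LieRing L] [LieAlgebra R L]
  [AddCommGroup M] [Module R M] [LieRingModule L M] [LieModule R L M]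

def iteratedBracketKernel (S : Set L) : ℕ → Submodule R M
  | 0 => ⊥
  | k + 1 => ⨅ x ∈ S, (iteratedBracketKernel S k).comap (LieModule.toEnd R L M x)

variable {R M} {S : Set L}

@[simp]
lemma iteratedBracketKernel_zero : iteratedBracketKernel R M S 0 = ⊥ := rfl

lemma mem_iteratedBracketKernel_succ {k : ℕ} {v : M} :
    v ∈ iteratedBracketKernel R M S (k + 1) ↔ ∀ x ∈ S, ⁅x, v⁆ ∈ iteratedBracketKernel R M S k := by
  simp [iteratedBracketKernel]

lemma iteratedBracketKernel_mono : Monotone (iteratedBracketKernel R M S) := by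
  refine monotone_nat_of_le_succ fun k => ?_
  induction k with
  | zero => simp
  | succ k ih =>
    intro v hv
    rw [mem_iteratedBracketKernel_succ] at hv ⊢
    exact fun x hx => ih (hv x hx)

lemma mem_iSup_iteratedBracketKernel {v : M} :
    v ∈ ⨆ k, iteratedBracketKernel R M S k ↔ ∃ k, v ∈ iteratedBracketKernel R M S k :=
  Submodule.mem_iSup_of_directed _ iteratedBracketKernel_mono.directed_le

lemma iteratedBracketKernel_span (k : ℕ) :
    iteratedBracketKernel R M (Submodule.span R S : Set L) k = iteratedBracketKernel R M S k := by
  induction k with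
  | zero => rfl
  | succ k ih =>
    ext v
    simp only [mem_iteratedBracketKernel_succ, ih]
    refine ⟨fun h x hx => h x (Submodule.subset_span hx), fun h x hx => ?_⟩
    induction hx using Submodule.span_induction with
    | mem x hx => exact h x hx
    | zero => simp
    | add x y _ _ hx hy => rw [add_lie]; exact add_mem hx hy
    | smul r x _ hx => rw [smul_lie]; exact Submodule.smul_mem _ r hx

lemma iteratedBracketKernel_anti {S' : Set L} (hSS' : S ⊆ S') (k : ℕ) :
    iteratedBracketKernel R M S' k ≤ iteratedBracketKernel R M S k := by
  induction k with
  | zero => rfl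
  | succ k ih =>
    intro v hv
    rw [mem_iteratedBracketKernel_succ] at hv ⊢
    exact fun x hx => ih (hv x (hSS' hx))

lemma map_mem_iteratedBracketKernel {L' M' : Type*} [LieRing L'] [LieAlgebra R L']
    [AddCommGroup M'] [Module R M'] [LieRingModule L' M'] [LieModule R L' M']
    {S' : Set L'} (f : M →ₗ[R] M') (hf : ∀ y ∈ S', ∃ x ∈ S, ∀ v, ⁅y, f v⁆ = f ⁅x, v⁆)
    {k : ℕ} {v : M} (hv : v ∈ iteratedBracketKernel R M S k) :
    f v ∈ iteratedBracketKernel R M' S' k := by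
  induction k generalizing v with
  | zero => simp_all
  | succ k ih =>
    rw [mem_iteratedBracketKernel_succ] at hv ⊢
    intro y hy
    obtain ⟨x, hx, hxy⟩ := hf y hy
    rw [hxy]
    exact ih (hv x hx)

end IteratedBracketKernel

section Eigenspaces

open Module End

variable {K V : Type*} [Field K] [AddCommGroup V] [Module K V]

lemma exists_maxGenEigenspace_sub_natCast_eq_bot [CharZero K] [FiniteDimensional K V]
    (φ : End K V) (μ : K) : ∃ k : ℕ, ∀ j, k ≤ j → φ.maxGenEigenspace (μ - j) = ⊥ := by
  have hinj : Function.Injective fun j : ℕ => μ - j := fun i j hij => by simpa using hij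
  obtain ⟨k, hk⟩ := (Submodule.finite_ne_bot_of_iSupIndep
    (φ.independent_maxGenEigenspace.comp hinj)).bddAbove
  exact ⟨k + 1, fun j hj => by_contra fun hne => by have := hk hne; omega⟩

variable {L : Type*} [LieRing L] [LieAlgebra K L] [LieRingModule L V] [LieModule K L V]
  {S : Set L}

lemma maxGenEigenspace_le_iteratedBracketKernel (φ : End K V)
    (hS : ∀ ξ ∈ S, ∃ d : ℕ, 0 < d ∧
      ∀ μ, ∀ v ∈ φ.maxGenEigenspace μ, ⁅ξ, v⁆ ∈ φ.maxGenEigenspace (μ - d))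
    (k : ℕ) (μ : K) (hμ : ∀ j : ℕ, k ≤ j → φ.maxGenEigenspace (μ - j) = ⊥) :
    φ.maxGenEigenspace μ ≤ iteratedBracketKernel K V S k := by
  induction k generalizing μ with
  | zero => simpa using hμ 0 le_rfl
  | succ k ih =>
    intro v hv
    rw [mem_iteratedBracketKernel_succ]
    intro ξ hξ
    obtain ⟨d, hd, hdμ⟩ := hS ξ hξ
    refine ih (μ - d) (fun j hj => ?_) (hdμ μ v hv)
    convert hμ (d + j) (by omega) using 2
    push_cast; ring

variable [IsAlgClosed K] [CharZero K]

lemma iSup_iteratedBracketKernel_eq_top [FiniteDimensional K V] (φ : End K V)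
    (hS : ∀ ξ ∈ S, ∃ d : ℕ, 0 < d ∧
      ∀ μ, ∀ v ∈ φ.maxGenEigenspace μ, ⁅ξ, v⁆ ∈ φ.maxGenEigenspace (μ - d)) :
    ⨆ k, iteratedBracketKernel K V S k = ⊤ := by
  rw [eq_top_iff, ← φ.iSup_maxGenEigenspace_eq_top]
  refine iSup_le fun μ => ?_
  obtain ⟨k, hk⟩ := exists_maxGenEigenspace_sub_natCast_eq_bot φ μ
  exact (maxGenEigenspace_le_iteratedBracketKernel φ hS k μ hk).trans (le_iSup _ k)

lemma LieAlgebra.exists_mem_iteratedBracketKernel_of_le_iSup_eigenspace {g : Type*} [LieRing g]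
    [LieAlgebra K g] [FiniteDimensional K g] (h : g) {m : Submodule K g}
    (hm : m ≤ ⨆ (i : ℤ) (_ : i ≤ -1), (LieAlgebra.ad K g h).eigenspace (i : K)) (x : g) :
    ∃ k, x ∈ iteratedBracketKernel K g (m : Set g) k := by
  set S := {ξ : g | ∃ i : ℤ, i ≤ -1 ∧ ξ ∈ (LieAlgebra.ad K g h).eigenspace (i : K)}
  have hmS : (m : Set g) ⊆ Submodule.span K S :=
    hm.trans (iSup₂_le fun i hi _ hξ => Submodule.subset_span ⟨i, hi, hξ⟩)
  have hS : ∀ ξ ∈ S, ∃ d : ℕ, 0 < d ∧ ∀ μ, ∀ v ∈ (LieAlgebra.ad K g h).maxGenEigenspace μ,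
      ⁅ξ, v⁆ ∈ (LieAlgebra.ad K g h).maxGenEigenspace (μ - d) := by
    rintro ξ ⟨i, hi, hξ⟩
    refine ⟨(-i).toNat, by omega, fun μ v hv => ?_⟩
    have hd : (((-i).toNat : ℕ) : K) = -(i : K) := by
      rw [← Int.cast_natCast, Int.toNat_of_nonneg (by omega), Int.cast_neg]
    rw [hd, sub_neg_eq_add, add_comm]
    exact LieModule.lie_mem_maxGenEigenspace_toEnd (eigenspace_le_maxGenEigenspace hξ) hv
  obtain ⟨k, hk⟩ := mem_iSup_iteratedBracketKernel.1
    (iSup_iteratedBracketKernel_eq_top (LieAlgebra.ad K g h) hS ▸ Submodule.mem_top : x ∈ _)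
  exact ⟨k, iteratedBracketKernel_anti hmS k (by rwa [iteratedBracketKernel_span])⟩

end Eigenspaces

section Associative

attribute [local instance 100] LieRing.ofAssociativeRing

variable {R A : Type*} [CommRing R] [Ring A] [Algebra R A] {S : Set A}

lemma mul_mem_iteratedBracketKernel {i j : ℕ} {v w : A}
    (hv : v ∈ iteratedBracketKernel R A S i) (hw : w ∈ iteratedBracketKernel R A S j) :
    v * w ∈ iteratedBracketKernel R A S (i + j) := by
  induction i generalizing j v w with
  | zero => simp_all
  | succ i ihi =>
    induction j generalizing w with
    | zero => simp_all
    | succ j ihj =>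
      rw [mem_iteratedBracketKernel_succ] at hv hw
      rw [← add_assoc, mem_iteratedBracketKernel_succ]
      intro x hx
      have hleibniz : ⁅x, v * w⁆ = ⁅x, v⁆ * w + v * ⁅x, w⁆ := by
        simp only [LieRing.of_associative_ring_bracket]; noncomm_ring
      rw [hleibniz]
      refine add_mem ?_ (ihj (hw x hx))
      convert ihi (hv x hx) (mem_iteratedBracketKernel_succ.2 hw) using 2
      omega

lemma algebraMap_mem_iteratedBracketKernel_one (r : R) :
    algebraMap R A r ∈ iteratedBracketKernel R A S 1 := by
  simp [mem_iteratedBracketKernel_succ, LieRing.of_associative_ring_bracket, Algebra.commutes]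

lemma exists_mem_iteratedBracketKernel_of_mem_adjoin {X : Set A}
    (hX : ∀ x ∈ X, ∃ k, x ∈ iteratedBracketKernel R A S k) {u : A} (hu : u ∈ Algebra.adjoin R X) :
    ∃ k, u ∈ iteratedBracketKernel R A S k := by
  induction hu using Algebra.adjoin_induction with
  | mem x hx => exact hX x hx
  | algebraMap r => exact ⟨1, algebraMap_mem_iteratedBracketKernel_one r⟩
  | add u v _ _ hu hv =>
    obtain ⟨i, hi⟩ := hu
    obtain ⟨j, hj⟩ := hv
    exact ⟨max i j, add_mem (iteratedBracketKernel_mono (le_max_left i j) hi)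
      (iteratedBracketKernel_mono (le_max_right i j) hj)⟩
  | mul u v _ _ hu hv =>
    obtain ⟨i, hi⟩ := hu
    obtain ⟨j, hj⟩ := hv
    exact ⟨i + j, mul_mem_iteratedBracketKernel hi hj⟩

lemma prod_ofFn_mul_mem_of_mem_iteratedBracketKernel {I : Submodule A A} (hSI : S ⊆ I) {n : ℕ}
    {u : A} (hu : u ∈ iteratedBracketKernel R A S n) (t : Fin n → A) (ht : ∀ i, t i ∈ S) :
    (List.ofFn t).prod * u ∈ I := by
  induction n generalizing u with
  | zero => simp_all
  | succ n ih =>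
    rw [List.ofFn_succ', List.prod_concat, mul_assoc]
    have hcomm : t (Fin.last n) * u = ⁅t (Fin.last n), u⁆ + u * t (Fin.last n) := by
      rw [LieRing.of_associative_ring_bracket]; abel
    rw [hcomm, mul_add, ← mul_assoc]
    exact add_mem (ih (mem_iteratedBracketKernel_succ.1 hu _ (ht _)) _ fun i => ht _)
      (I.smul_mem _ (hSI (ht _)))

end Associative

namespace UniversalEnvelopingAlgebra

variable {K g : Type*} [CommRing K] [LieRing g] [LieAlgebra K g]

lemma adjoin_range_ι :
    Algebra.adjoin K (Set.range (ι K : g → UniversalEnvelopingAlgebra K g)) = ⊤ := by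
  have : Set.range (ι K : g → UniversalEnvelopingAlgebra K g) =
      mkAlgHom K g '' Set.range (TensorAlgebra.ι K) := by
    rw [← Set.range_comp]; rfl
  rw [this, ← AlgHom.map_adjoin, TensorAlgebra.adjoin_range_ι, Algebra.map_top,
    AlgHom.range_eq_top]
  exact RingCon.mkₐ_surjective _

attribute [local instance 100] LieRing.ofAssociativeRing

theorem exists_forall_prod_ofFn_mul_mem_span (m : Set g) (χ : g → K)
    (hm : ∀ x : g, ∃ k, x ∈ iteratedBracketKernel K g m k) (u : UniversalEnvelopingAlgebra K g) :
    ∃ n : ℕ, ∀ ξ : Fin n → g, (∀ i, ξ i ∈ m) →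
      (List.ofFn fun i => ι K (ξ i) - algebraMap K _ (χ (ξ i))).prod * u ∈
        Submodule.span (UniversalEnvelopingAlgebra K g)
          {a | ∃ ξ ∈ m, a = ι K ξ - algebraMap K _ (χ ξ)} := by
  set mχ := {a | ∃ ξ ∈ m, a = ι K ξ - algebraMap K (UniversalEnvelopingAlgebra K g) (χ ξ)}
  have hι : ∀ a ∈ Set.range (ι K : g → UniversalEnvelopingAlgebra K g),
      ∃ k, a ∈ iteratedBracketKernel K _ mχ k := by
    rintro _ ⟨x, rfl⟩
    obtain ⟨k, hk⟩ := hm x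
    refine ⟨k, map_mem_iteratedBracketKernel (ι K : g →ₗ⁅K⁆ _).toLinearMap ?_ hk⟩
    rintro _ ⟨ξ, hξ, rfl⟩
    refine ⟨ξ, hξ, fun v => ?_⟩
    rw [LieHom.coe_toLinearMap, sub_lie, LieHom.map_lie,
      LieRing.of_associative_ring_bracket (algebraMap _ _ _), Algebra.commutes, sub_self, sub_zero]
  obtain ⟨n, hn⟩ := exists_mem_iteratedBracketKernel_of_mem_adjoin hι
    (u := u) (by rw [adjoin_range_ι]; exact Algebra.mem_top)
  exact ⟨n, fun ξ hξ => prod_ofFn_mul_mem_of_mem_iteratedBracketKernel Submodule.subset_span hn _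
    fun i => ⟨ξ i, hξ i, rfl⟩⟩

end UniversalEnvelopingAlgebra

theorem quotient_is_whittaker_general
    (K : Type*) [Field K] [IsAlgClosed K] [CharZero K]
    (g : Type*) [LieRing g] [LieAlgebra K g] [FiniteDimensional K g]
    (e h : g)
    (l : Submodule K g)
    (hl : l ≤ Module.End.eigenspace (LieAlgebra.ad K g h) ((-1 : ℤ) : K))
    (m : Submodule K g)
    (hm : m = l ⊔ ⨆ i : ℤ, ⨆ _ : i ≤ -2,
      Module.End.eigenspace (LieAlgebra.ad K g h) (i : K))
    (I : Submodule (UniversalEnvelopingAlgebra K g) (UniversalEnvelopingAlgebra K g))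
    (hI : I = Submodule.span (UniversalEnvelopingAlgebra K g)
      {u : UniversalEnvelopingAlgebra K g | ∃ ξ ∈ m,
        u = UniversalEnvelopingAlgebra.ι K ξ -
          algebraMap K (UniversalEnvelopingAlgebra K g) (killingForm K g e ξ)}) :
    ∀ u : UniversalEnvelopingAlgebra K g, ∃ n : ℕ,
      ∀ ξ : Fin n → g, (∀ i, ξ i ∈ m) →
        (List.ofFn fun i : Fin n =>
            UniversalEnvelopingAlgebra.ι K (ξ i) -
              algebraMap K (UniversalEnvelopingAlgebra K g)
                (killingForm K g e (ξ i))).prod * u ∈ I := by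
  have hm' : m ≤ ⨆ (i : ℤ) (_ : i ≤ -1), (LieAlgebra.ad K g h).eigenspace (i : K) := by
    rw [hm]
    exact sup_le (hl.trans (le_iSup₂_of_le (-1) le_rfl le_rfl))
      (iSup₂_mono' fun i hi => ⟨i, by omega, le_rfl⟩)
  subst hI
  exact UniversalEnvelopingAlgebra.exists_forall_prod_ofFn_mul_mem_span m (killingForm K g e)
    (LieAlgebra.exists_mem_iteratedBracketKernel_of_le_iSup_eigenspace h hm')

/-- The left `U`-module `U/U·m_χ` is a Whittaker module: for every `u ∈ U`
there exists `n ∈ ℕ` such that `(ξ₁ − χ(ξ₁))·(ξ₂ − χ(ξ₂))⋯(ξₙ − χ(ξₙ))·u ∈ U·m_χ` for all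
`ξ₁, …, ξₙ ∈ m`. -/
theorem quotient_is_whittaker
    (K : Type*) [Field K] [IsAlgClosed K] [CharZero K]
    (g : Type*) [LieRing g] [LieAlgebra K g] [FiniteDimensional K g]
    [LieAlgebra.IsSemisimple K g]
    (e h f : g) (he : e ≠ 0)
    (hhe : ⁅h, e⁆ = (2 : K) • e) (hhf : ⁅h, f⁆ = (-2 : K) • f) (hef : ⁅e, f⁆ = h)
    (l : Submodule K g)
    (hl : l ≤ Module.End.eigenspace (LieAlgebra.ad K g h) ((-1 : ℤ) : K))
    (hiso : ∀ x ∈ l, ∀ y ∈ l, killingForm K g e ⁅x, y⁆ = 0)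
    (hmax : ∀ l' : Submodule K g,
      l' ≤ Module.End.eigenspace (LieAlgebra.ad K g h) ((-1 : ℤ) : K) →
      (∀ x ∈ l', ∀ y ∈ l', killingForm K g e ⁅x, y⁆ = 0) → l ≤ l' → l' = l)
    (m : Submodule K g)
    (hm : m = l ⊔ ⨆ i : ℤ, ⨆ _ : i ≤ -2,
      Module.End.eigenspace (LieAlgebra.ad K g h) (i : K))
    (I : Submodule (UniversalEnvelopingAlgebra K g) (UniversalEnvelopingAlgebra K g))
    (hI : I = Submodule.span (UniversalEnvelopingAlgebra K g)
      {u : UniversalEnvelopingAlgebra K g | ∃ ξ ∈ m,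
        u = UniversalEnvelopingAlgebra.ι K ξ -
          algebraMap K (UniversalEnvelopingAlgebra K g) (killingForm K g e ξ)}) :
    ∀ u : UniversalEnvelopingAlgebra K g, ∃ n : ℕ,
      ∀ ξ : Fin n → g, (∀ i, ξ i ∈ m) →
        (List.ofFn fun i : Fin n =>
            UniversalEnvelopingAlgebra.ι K (ξ i) -
              algebraMap K (UniversalEnvelopingAlgebra K g)
                (killingForm K g e (ξ i))).prod * u ∈ I :=
  quotient_is_whittaker_general K g e h l hl m hm I hI
end

section
/- If L is a finite-dimensional g-module and M is a Whittaker g-module, then the tensor product L ⊗ M (with the diagonal g-action ξ·(l⊗v) = (ξ·l)⊗v + l⊗(ξ·v)) is again a Whittaker g-module. -/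
/-!
On `L ⊗ M` the operator `ξ - χ(ξ)` is `ρ_L(ξ) ⊗ 1 + 1 ⊗ (ρ_M(ξ) - χ(ξ))`, so a product of `a + b`
such operators applied to `x ⊗ v` expands into terms in which at least `a` factors act on `x` or
at least `b` factors act on `v`. It therefore suffices that `m` itself (without the shift by `χ`)
acts locally nilpotently on `L`. This holds because `m` lies in the sum of the negative
`ad h`-eigenspaces, which move generalized `h`-eigenvectors of `L` from eigenvalue `μ` to
`μ - j` with `j` a positive integer; since `L` has finitely many eigenvalues, long products vanish.
-/

open scoped TensorProduct

/-- A `g`-module `M` is Whittaker (for the nilpotent `e` and the subalgebra `m`) if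
`m_χ` acts locally nilpotently on `M`: for every `v ∈ M` there exists `n ∈ ℕ` such that
`(ξ₁ − χ(ξ₁))⋯(ξₙ − χ(ξₙ))·v = 0` for all `ξ₁, …, ξₙ ∈ m`, where `χ = κ(e, ·)`. -/
noncomputable def IsWhittakerModule
    (K : Type*) [Field K]
    (g : Type*) [LieRing g] [LieAlgebra K g] [Module.Finite K g]
    (e : g) (m : Submodule K g)
    (M : Type*) [AddCommGroup M] [Module K M] [LieRingModule g M] [LieModule K g M] :
    Prop :=
  ∀ v : M, ∃ n : ℕ, ∀ ξ : Fin n → g, (∀ i, ξ i ∈ m) →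
    ((List.ofFn fun i : Fin n =>
      (LieModule.toEnd K g M (ξ i) - killingForm K g e (ξ i) • 1)).prod) v = 0

open LieModule Module.End

section ProductsAnnihilate

variable {R ι V : Type*} [Semiring R] [AddCommMonoid V] [Module R V]

def ProductsAnnihilate (T : ι → Module.End R V) (s : Set ι) (n : ℕ) (v : V) : Prop :=
  ∀ ξ : Fin n → ι, (∀ i, ξ i ∈ s) → (List.ofFn fun i => T (ξ i)).prod v = 0

namespace ProductsAnnihilate

variable {T : ι → Module.End R V} {s : Set ι} {n : ℕ} {v w : V}

theorem zero : ProductsAnnihilate T s n 0 :=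
  fun _ _ => map_zero _

theorem add (hv : ProductsAnnihilate T s n v) (hw : ProductsAnnihilate T s n w) :
    ProductsAnnihilate T s n (v + w) :=
  fun ξ hξ => by rw [map_add, hv ξ hξ, hw ξ hξ, add_zero]

theorem smul (c : R) (hv : ProductsAnnihilate T s n v) : ProductsAnnihilate T s n (c • v) :=
  fun ξ hξ => by rw [map_smul, hv ξ hξ, smul_zero]

theorem eq_zero (hv : ProductsAnnihilate T s 0 v) : v = 0 := by
  simpa using hv Fin.elim0 fun i => i.elim0

theorem mono {n' : ℕ} (hn : n ≤ n') (hv : ProductsAnnihilate T s n v) :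
    ProductsAnnihilate T s n' v := by
  induction n', hn using Nat.le_induction with
  | base => exact hv
  | succ n' _ ih =>
    intro ξ hξ
    rw [List.ofFn_succ, List.prod_cons, Module.End.mul_apply,
      ih (fun i => ξ i.succ) (fun i => hξ i.succ), map_zero]

end ProductsAnnihilate

theorem productsAnnihilate_succ_iff {T : ι → Module.End R V} {s : Set ι} {n : ℕ} {v : V} :
    ProductsAnnihilate T s (n + 1) v ↔ ∀ ξ ∈ s, ProductsAnnihilate T s n (T ξ v) := by
  constructor
  · intro hv ξ hξ η hη
    have := hv (Fin.snoc η ξ) (Fin.lastCases (by simpa using hξ) (by simpa using hη))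
    rw [List.ofFn_succ', List.prod_concat, Module.End.mul_apply] at this
    simpa only [Fin.snoc_castSucc, Fin.snoc_last] using this
  · intro hv η hη
    rw [List.ofFn_succ', List.prod_concat, Module.End.mul_apply]
    exact hv _ (hη _) _ fun i => hη _

theorem ProductsAnnihilate.of_mem_filtration {T : ι → Module.End R V} {s : Set ι}
    {F : ℕ → Submodule R V} (hF : ∀ ξ ∈ s, ∀ k, F k ≤ (F (k + 1)).comap (T ξ)) :
    ∀ {k n : ℕ} {v : V}, v ∈ F k → F (k + n) = ⊥ → ProductsAnnihilate T s n v
  | k, 0, v, hv, hbot => by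
    rw [Nat.add_zero] at hbot
    rw [hbot, Submodule.mem_bot] at hv
    exact hv ▸ ProductsAnnihilate.zero
  | k, n + 1, v, hv, hbot => productsAnnihilate_succ_iff.mpr fun ξ hξ =>
    of_mem_filtration hF (hF ξ hξ k hv) (by rwa [Nat.add_right_comm])

def locallyNilpotentSubmodule (T : ι → Module.End R V) (s : Set ι) : Submodule R V where
  carrier := {v | ∃ n, ProductsAnnihilate T s n v}
  zero_mem' := ⟨0, .zero⟩
  add_mem' := fun ⟨a, ha⟩ ⟨b, hb⟩ =>
    ⟨max a b, (ha.mono (le_max_left a b)).add (hb.mono (le_max_right a b))⟩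
  smul_mem' c _ := fun ⟨n, hn⟩ => ⟨n, hn.smul c⟩

end ProductsAnnihilate

section TensorProduct

variable {R ι L M : Type*} [CommSemiring R] [AddCommMonoid L] [Module R L]
  [AddCommMonoid M] [Module R M] {A : ι → Module.End R L} {B : ι → Module.End R M} {s : Set ι}

theorem ProductsAnnihilate.tmul {a b : ℕ} {x : L} {v : M} (hx : ProductsAnnihilate A s a x)
    (hv : ProductsAnnihilate B s b v) :
    ProductsAnnihilate (fun ξ => (A ξ).rTensor M + (B ξ).lTensor L) s (a + b) (x ⊗ₜ v) := by
  induction a generalizing b x v with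
  | zero => rw [hx.eq_zero, TensorProduct.zero_tmul]; exact .zero
  | succ a iha =>
    induction b generalizing x v with
    | zero => rw [hv.eq_zero, TensorProduct.tmul_zero]; exact .zero
    | succ b ihb =>
      rw [← Nat.add_assoc]
      refine productsAnnihilate_succ_iff.mpr fun ξ hξ => ?_
      rw [LinearMap.add_apply, LinearMap.rTensor_tmul, LinearMap.lTensor_tmul]
      refine .add ?_ ?_
      · rw [Nat.add_right_comm]
        exact iha (productsAnnihilate_succ_iff.mp hx ξ hξ) hv
      · exact ihb hx (productsAnnihilate_succ_iff.mp hv ξ hξ)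

theorem locallyNilpotentSubmodule_tensorProduct_eq_top
    (hA : locallyNilpotentSubmodule A s = ⊤) (hB : locallyNilpotentSubmodule B s = ⊤) :
    locallyNilpotentSubmodule (fun ξ => (A ξ).rTensor M + (B ξ).lTensor L) s = ⊤ := by
  rw [eq_top_iff, ← TensorProduct.span_tmul_eq_top, Submodule.span_le]
  rintro _ ⟨x, v, rfl⟩
  obtain ⟨a, ha⟩ := Submodule.eq_top_iff'.mp hA x
  obtain ⟨b, hb⟩ := Submodule.eq_top_iff'.mp hB v
  exact ⟨a + b, ha.tmul hb⟩

end TensorProduct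

section Filtration

variable {R W V : Type*} [CommSemiring R] [AddCommMonoid W] [Module R W]
  [AddCommMonoid V] [Module R V]

def filtrationLowering (T : W →ₗ[R] Module.End R V) (F : ℕ → Submodule R V) :
    Submodule R W where
  carrier := {ξ | ∀ k, F k ≤ (F (k + 1)).comap (T ξ)}
  zero_mem' k x _ := by simp
  add_mem' hξ hη k x hx := by
    simpa using add_mem (Submodule.mem_comap.mp (hξ k hx)) (Submodule.mem_comap.mp (hη k hx))
  smul_mem' c _ hξ k x hx := by
    simpa using Submodule.smul_mem _ c (Submodule.mem_comap.mp (hξ k hx))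

end Filtration

section EigenFiltration

variable {K V : Type*} [Field K] [AddCommGroup V] [Module K V]

def eigenFiltration (H : Module.End K V) (μ : K) (k : ℕ) : Submodule K V :=
  ⨆ (j : ℤ) (_ : (k : ℤ) ≤ j), H.maxGenEigenspace (μ - j)

theorem maxGenEigenspace_le_eigenFiltration_zero (H : Module.End K V) (μ : K) :
    H.maxGenEigenspace μ ≤ eigenFiltration H μ 0 :=
  le_iSup₂_of_le (0 : ℤ) le_rfl (by simp)

theorem exists_eigenFiltration_eq_bot [CharZero K] [FiniteDimensional K V]
    (H : Module.End K V) (μ : K) : ∃ r, eigenFiltration H μ r = ⊥ := by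
  have hfin : ((fun j : ℤ => μ - j) ⁻¹' {ν | H.maxGenEigenspace ν ≠ ⊥}).Finite :=
    (WellFoundedGT.finite_ne_bot_of_iSupIndep H.independent_maxGenEigenspace).preimage
      fun i _ j _ hij => Int.cast_injective (sub_right_injective hij)
  obtain ⟨r, hr⟩ := hfin.bddAbove
  refine ⟨r.toNat + 1, iSup₂_eq_bot.mpr fun j hj => ?_⟩
  by_contra hne
  have := hr hne
  omega

end EigenFiltration

section LieModule

variable {K g L : Type*} [Field K] [LieRing g] [LieAlgebra K g]
  [AddCommGroup L] [Module K L] [LieRingModule g L] [LieModule K g L]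

theorem eigenFiltration_le_comap_succ {h ξ : g} {i : ℤ} (hi : i ≤ -1)
    (hξ : ξ ∈ eigenspace (LieAlgebra.ad K g h) (i : K)) (μ : K) (k : ℕ) :
    eigenFiltration (toEnd K g L h) μ k ≤
      (eigenFiltration (toEnd K g L h) μ (k + 1)).comap (toEnd K g L ξ) := by
  refine iSup₂_le fun j hj y hy => ?_
  have hξ' : ξ ∈ (toEnd K g g h).maxGenEigenspace (i : K) :=
    (genEigenspace _ _).monotone le_top hξ
  have hy' : ⁅ξ, y⁆ ∈ (toEnd K g L h).maxGenEigenspace (μ - ((j - i : ℤ) : K)) := by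
    convert lie_mem_maxGenEigenspace_toEnd hξ' hy using 2
    push_cast
    ring
  exact le_iSup₂ (f := fun (j : ℤ) (_ : ((k + 1 : ℕ) : ℤ) ≤ j) =>
    (toEnd K g L h).maxGenEigenspace (μ - j)) (j - i) (by omega) hy'

theorem locallyNilpotentSubmodule_toEnd_eq_top [IsAlgClosed K] [CharZero K]
    [FiniteDimensional K L] (h : g) {s : Set g}
    (hs : s ⊆ ↑(⨆ i : ℤ, ⨆ _ : i ≤ -1, eigenspace (LieAlgebra.ad K g h) (i : K))) :
    locallyNilpotentSubmodule (toEnd K g L) s = ⊤ := by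
  rw [eq_top_iff, ← iSup_maxGenEigenspace_eq_top (toEnd K g L h)]
  refine iSup_le fun μ x hx => ?_
  have hlower : ⨆ i : ℤ, ⨆ _ : i ≤ -1, eigenspace (LieAlgebra.ad K g h) (i : K) ≤
      filtrationLowering (toEnd K g L : g →ₗ[K] Module.End K L)
        (eigenFiltration (toEnd K g L h) μ) :=
    iSup₂_le fun i hi ξ hξ => eigenFiltration_le_comap_succ hi hξ μ
  obtain ⟨r, hr⟩ := exists_eigenFiltration_eq_bot (toEnd K g L h) μ
  exact ⟨r, ProductsAnnihilate.of_mem_filtration (fun ξ hξ => hlower (hs hξ))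
    (maxGenEigenspace_le_eigenFiltration_zero _ μ hx) (by rwa [zero_add])⟩

variable {M : Type*} [AddCommGroup M] [Module K M] [LieRingModule g M] [LieModule K g M]

theorem toEnd_tensorProduct_sub_smul (ξ : g) (c : K) :
    toEnd K g (L ⊗[K] M) ξ - c • 1 =
      (toEnd K g L ξ).rTensor M + (toEnd K g M ξ - c • 1).lTensor L := by
  refine TensorProduct.ext' fun x v => ?_
  simp only [LinearMap.sub_apply, LinearMap.smul_apply, Module.End.one_apply,
    LinearMap.add_apply, LinearMap.rTensor_tmul, LinearMap.lTensor_tmul, toEnd_apply_apply,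
    TensorProduct.LieModule.lie_tmul_right, TensorProduct.tmul_sub, TensorProduct.tmul_smul]
  abel

end LieModule

theorem isWhittakerModule_iff {K g : Type*} [Field K] [LieRing g] [LieAlgebra K g]
    [Module.Finite K g] (e : g) (m : Submodule K g)
    (M : Type*) [AddCommGroup M] [Module K M] [LieRingModule g M] [LieModule K g M] :
    IsWhittakerModule K g e m M ↔
      locallyNilpotentSubmodule (fun ξ => toEnd K g M ξ - killingForm K g e ξ • 1) m = ⊤ := by
  rw [Submodule.eq_top_iff']; rfl

theorem tensor_with_finite_dimensional_is_whittaker_general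
    (K : Type*) [Field K] [IsAlgClosed K] [CharZero K]
    (g : Type*) [LieRing g] [LieAlgebra K g] [FiniteDimensional K g]
    (e h : g)
    (l : Submodule K g)
    (hl : l ≤ Module.End.eigenspace (LieAlgebra.ad K g h) ((-1 : ℤ) : K))
    (m : Submodule K g)
    (hm : m = l ⊔ ⨆ i : ℤ, ⨆ _ : i ≤ -2,
      Module.End.eigenspace (LieAlgebra.ad K g h) (i : K))
    (L : Type*) [AddCommGroup L] [Module K L] [LieRingModule g L] [LieModule K g L]
    [FiniteDimensional K L]
    (M : Type*) [AddCommGroup M] [Module K M] [LieRingModule g M] [LieModule K g M]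
    (hM : IsWhittakerModule K g e m M) :
    IsWhittakerModule K g e m (L ⊗[K] M) := by
  have hneg : m ≤ ⨆ i : ℤ, ⨆ _ : i ≤ -1, eigenspace (LieAlgebra.ad K g h) (i : K) := by
    rw [hm]
    exact sup_le (le_iSup₂_of_le (-1) le_rfl hl)
      (iSup₂_mono' fun i hi => ⟨i, by omega, le_rfl⟩)
  rw [isWhittakerModule_iff] at hM ⊢
  simp_rw [toEnd_tensorProduct_sub_smul]
  exact locallyNilpotentSubmodule_tensorProduct_eq_top
    (locallyNilpotentSubmodule_toEnd_eq_top h hneg) hM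

/-- If `L` is a finite-dimensional `g`-module and `M` is a Whittaker
`g`-module, then the tensor product `L ⊗ M` (with the diagonal `g`-action
`ξ·(l ⊗ v) = (ξ·l) ⊗ v + l ⊗ (ξ·v)`) is again a Whittaker `g`-module. -/
theorem tensor_with_finite_dimensional_is_whittaker
    (K : Type*) [Field K] [IsAlgClosed K] [CharZero K]
    (g : Type*) [LieRing g] [LieAlgebra K g] [FiniteDimensional K g]
    [LieAlgebra.IsSemisimple K g]
    (e h f : g) (he : e ≠ 0)
    (hhe : ⁅h, e⁆ = (2 : K) • e) (hhf : ⁅h, f⁆ = (-2 : K) • f) (hef : ⁅e, f⁆ = h)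
    (l : Submodule K g)
    (hl : l ≤ Module.End.eigenspace (LieAlgebra.ad K g h) ((-1 : ℤ) : K))
    (hiso : ∀ x ∈ l, ∀ y ∈ l, killingForm K g e ⁅x, y⁆ = 0)
    (hmax : ∀ l' : Submodule K g,
      l' ≤ Module.End.eigenspace (LieAlgebra.ad K g h) ((-1 : ℤ) : K) →
      (∀ x ∈ l', ∀ y ∈ l', killingForm K g e ⁅x, y⁆ = 0) → l ≤ l' → l' = l)
    (m : Submodule K g)
    (hm : m = l ⊔ ⨆ i : ℤ, ⨆ _ : i ≤ -2,
      Module.End.eigenspace (LieAlgebra.ad K g h) (i : K))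
    (L : Type*) [AddCommGroup L] [Module K L] [LieRingModule g L] [LieModule K g L]
    [FiniteDimensional K L]
    (M : Type*) [AddCommGroup M] [Module K M] [LieRingModule g M] [LieModule K g M]
    (hM : IsWhittakerModule K g e m M) :
    IsWhittakerModule K g e m (L ⊗[K] M) :=
  tensor_with_finite_dimensional_is_whittaker_general K g e h l hl m hm L M hM
end

section
/- Every nonzero Whittaker g-module contains a nonzero Whittaker vector: if M is a Whittaker g-module with M ≠ 0, then M^{m_χ} := {v ∈ M : ξ·v = χ(ξ)·v for all ξ ∈ m} is nonzero. -/
/-- Every nonzero Whittaker `g`-module contains a nonzero Whittaker vector: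
if `M` is a Whittaker `g`-module with `M ≠ 0`, then
`M^{m_χ} := {v ∈ M : ξ·v = χ(ξ)·v for all ξ ∈ m}` is nonzero. -/
theorem whittaker_module_has_whittaker_vector
    (K : Type*) [Field K] [IsAlgClosed K] [CharZero K]
    (g : Type*) [LieRing g] [LieAlgebra K g] [FiniteDimensional K g]
    [LieAlgebra.IsSemisimple K g]
    (e h f : g) (he : e ≠ 0)
    (hhe : ⁅h, e⁆ = (2 : K) • e) (hhf : ⁅h, f⁆ = (-2 : K) • f) (hef : ⁅e, f⁆ = h)
    (l : Submodule K g)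
    (hl : l ≤ Module.End.eigenspace (LieAlgebra.ad K g h) ((-1 : ℤ) : K))
    (hiso : ∀ x ∈ l, ∀ y ∈ l, killingForm K g e ⁅x, y⁆ = 0)
    (hmax : ∀ l' : Submodule K g,
      l' ≤ Module.End.eigenspace (LieAlgebra.ad K g h) ((-1 : ℤ) : K) →
      (∀ x ∈ l', ∀ y ∈ l', killingForm K g e ⁅x, y⁆ = 0) → l ≤ l' → l' = l)
    (m : Submodule K g)
    (hm : m = l ⊔ ⨆ i : ℤ, ⨆ _ : i ≤ -2,
      Module.End.eigenspace (LieAlgebra.ad K g h) (i : K))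
    (M : Type*) [AddCommGroup M] [Module K M] [LieRingModule g M] [LieModule K g M]
    (hM : IsWhittakerModule K g e m M)
    (hM0 : ∃ v : M, v ≠ 0) :
    ∃ v : M, v ≠ 0 ∧ ∀ ξ ∈ m, ⁅ξ, v⁆ = killingForm K g e ξ • v := by
  classical
  obtain ⟨v, hv⟩ := hM0
  set P : ℕ → Prop := fun n => ∀ ξ : Fin n → g, (∀ i, ξ i ∈ m) →
    ((List.ofFn fun i : Fin n =>
      (LieModule.toEnd K g M (ξ i) - killingForm K g e (ξ i) • 1)).prod) v = 0 with hP
  have hex : ∃ n, P n := hM v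
  set N := Nat.find hex with hN
  have hPN : P N := Nat.find_spec hex
  have hN0 : N ≠ 0 := by
    intro h0
    have := hPN
    rw [h0] at this
    have hv0 := this (fun i => i.elim0) (fun i => i.elim0)
    simp at hv0
    exact hv hv0
  obtain ⟨k, hk⟩ : ∃ k, N = k + 1 := ⟨N - 1, (Nat.succ_pred_eq_of_pos (Nat.pos_of_ne_zero hN0)).symm⟩
  rw [hk] at hPN
  have hnk : ¬ P k := Nat.find_min hex (by omega)
  simp only [hP, not_forall, Classical.not_imp] at hnk
  obtain ⟨ξ, hξm, hw⟩ := hnk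
  set w : M := ((List.ofFn fun i : Fin k =>
      (LieModule.toEnd K g M (ξ i) - killingForm K g e (ξ i) • 1)).prod) v with hwdef
  refine ⟨w, hw, ?_⟩
  intro ξ₀ hξ₀
  have key := hPN (Fin.cons ξ₀ ξ) (by
    intro i
    refine Fin.cases ?_ ?_ i <;> simp [hξ₀, hξm])
  simp only [List.ofFn_succ, Fin.cons_zero, Fin.cons_succ, List.prod_cons,
    Module.End.mul_apply] at key
  have key2 : (LieModule.toEnd K g M ξ₀ - killingForm K g e ξ₀ • 1) w = 0 := key
  simpa [sub_eq_zero] using key2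
end
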